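/- arXiv:1401.7956 — 8 statements merged into one kernel-verified Lean document; each statement's English description precedes it below -/
import Mathlib

section
/- Let K be a finite simplicial complex in ℝⁿ with underlying polyhedron X. Then there exist ε > 0 and λ ≥ 1 such that any two points x, y ∈ X with |x − y| < ε can be joined by a Lipschitz curve inside X: there is γ : [0,1] → ℝⁿ with γ([0,1]) ⊆ X, γ(0) = x, γ(1) = y, and γ Lipschitz with constant at most λ|x − y| (so in particular of length at most λ|x − y|). -/
/-!
The polyhedron is the finite union of the simplices `convexHull s`. Simplices with disjoint hulls
are a positive distance apart, so for small `ε` two `ε`-close points `x ∈ convexHull s`,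
`y ∈ convexHull t` lie in simplices that meet. For two polytopes `P`, `Q` that meet, there is a
Hoffman-type error bound `dist x (P ∩ Q) ≤ C * dist x y` for `x ∈ P`, `y ∈ Q`; then `x` and `y`
are joined by the two segments `[x, x']` and `[x', y]`, where `x' ∈ P ∩ Q` realises the bound.

The error bound is proved for a polytope `hull P` and a linear map `A` in the form
`dist w R ≤ C * ‖A w‖`, by induction on the vertex set `P`. If `hull P` misses `ker A`, this is
compactness. Otherwise pick `z ∈ hull P ∩ ker A`: the ray from `z` through `w` leaves `hull P`
through a facet `hull (P.erase q)`, where the bound holds by induction, and the homothety centred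
at `z` that maps the exit point back to `w` scales both sides of the bound by the same factor.
-/

open Metric Set Filter Topology AffineMap

theorem Finset.exists_lineMap_mem_convexHull_erase {𝕜 E : Type*} [Field 𝕜] [LinearOrder 𝕜]
    [IsStrictOrderedRing 𝕜] [AddCommGroup E] [Module 𝕜 E] [DecidableEq E] {P : Finset E}
    {z w : E} (hz : z ∈ convexHull 𝕜 (P : Set E)) (hw : w ∈ convexHull 𝕜 (P : Set E))
    (hwz : w ≠ z) :
    ∃ Λ ≥ (1 : 𝕜), ∃ q ∈ P, lineMap z w Λ ∈ convexHull 𝕜 (P.erase q : Set E) := by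
  obtain ⟨α, hα0, hα1, rfl⟩ := Finset.mem_convexHull'.1 hz
  obtain ⟨a, ha0, ha1, rfl⟩ := Finset.mem_convexHull'.1 hw
  set c : 𝕜 → E → 𝕜 := fun Λ p => α p + Λ * (a p - α p)
  have hc_sum : ∀ Λ, ∑ p ∈ P, c Λ p = 1 := fun Λ => by
    simp only [c, Finset.sum_add_distrib, ← Finset.mul_sum, Finset.sum_sub_distrib, ha1, hα1]
    ring
  have hc_comb : ∀ Λ,
      ∑ p ∈ P, c Λ p • p = lineMap (∑ p ∈ P, α p • p) (∑ p ∈ P, a p • p) Λ := fun Λ => by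
    simp only [c, lineMap_apply_module', add_smul, mul_smul, sub_smul, Finset.sum_add_distrib,
      ← Finset.smul_sum, Finset.sum_sub_distrib]
    abel
  -- `Λ` is the largest parameter for which all the coefficients `c Λ` stay nonnegative.
  obtain ⟨q, hq, hq_min⟩ := (P.filter fun p => a p < α p).exists_min_image
    (fun p => α p / (α p - a p)) (by
      by_contra hD
      simp only [Finset.not_nonempty_iff_eq_empty, Finset.filter_eq_empty_iff, not_lt] at hD
      have hαa : ∀ p ∈ P, α p = a p := (Finset.sum_eq_sum_iff_of_le hD).1 (hα1.trans ha1.symm)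
      exact hwz (Finset.sum_congr rfl fun p hp => by rw [hαa p hp]).symm)
  obtain ⟨hqP, hq_lt⟩ := Finset.mem_filter.1 hq
  have hq_pos : 0 < α q - a q := sub_pos.2 hq_lt
  set Λ := α q / (α q - a q)
  have hΛ : 1 ≤ Λ := (one_le_div hq_pos).2 (by linarith [ha0 q hqP])
  have hc_q : c Λ q = 0 := by
    simp only [c, Λ]
    field_simp
    ring
  refine ⟨Λ, hΛ, q, hqP, Finset.mem_convexHull'.2 ⟨c Λ, fun p hp => ?_, ?_, ?_⟩⟩
  · have hpP := Finset.mem_of_mem_erase hp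
    by_cases hp_lt : a p < α p
    · have := (le_div_iff₀ (sub_pos.2 hp_lt)).1 (hq_min p (Finset.mem_filter.2 ⟨hpP, hp_lt⟩))
      simp only [c]
      linarith
    · simp only [c]
      nlinarith [hα0 p hpP]
  · rw [Finset.sum_erase _ hc_q, hc_sum]
  · rw [Finset.sum_erase _ (by rw [hc_q, zero_smul]), hc_comb]

section PolytopeErrorBound

variable {E F : Type*} [NormedAddCommGroup E] [NormedSpace ℝ E]
  [NormedAddCommGroup F] [NormedSpace ℝ F]

theorem IsCompact.exists_dist_le_mul_norm {K R : Set E} (hK : IsCompact K) (hR : R.Nonempty)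
    (A : E →L[ℝ] F) (hKA : ∀ w ∈ K, A w ≠ 0) :
    ∃ C ≥ 0, ∀ w ∈ K, ∃ r ∈ R, dist w r ≤ C * ‖A w‖ := by
  obtain ⟨r, hr⟩ := hR
  rcases K.eq_empty_or_nonempty with rfl | hK₀
  · exact ⟨0, le_rfl, by simp⟩
  obtain ⟨w₀, hw₀, hmin⟩ :=
    hK.exists_isMinOn hK₀ (continuous_norm.comp A.continuous).continuousOn
  obtain ⟨w₁, -, hmax⟩ :=
    hK.exists_isMaxOn hK₀ (continuous_id.dist continuous_const).continuousOn
  have hm : 0 < ‖A w₀‖ := norm_pos_iff.2 (hKA w₀ hw₀)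
  refine ⟨dist w₁ r / ‖A w₀‖, div_nonneg dist_nonneg hm.le, fun w hw => ⟨r, hr, ?_⟩⟩
  calc dist w r ≤ dist w₁ r := hmax hw
    _ = dist w₁ r / ‖A w₀‖ * ‖A w₀‖ := (div_mul_cancel₀ _ hm.ne').symm
    _ ≤ dist w₁ r / ‖A w₀‖ * ‖A w‖ := by gcongr; exact hmin hw

theorem exists_dist_le_mul_norm_of_convexHull (A : E →L[ℝ] F) {R : Set E} (hR : Convex ℝ R)
    (hR₀ : R.Nonempty) (P : Finset E) (hPR : convexHull ℝ (P : Set E) ∩ {w | A w = 0} ⊆ R) :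
    ∃ C ≥ 0, ∀ w ∈ convexHull ℝ (P : Set E), ∃ r ∈ R, dist w r ≤ C * ‖A w‖ := by
  classical
  induction P using Finset.strongInduction with | H P ih =>
  rcases (convexHull ℝ (P : Set E) ∩ {w | A w = 0}).eq_empty_or_nonempty
    with hP | ⟨z, hzP, hzA : A z = 0⟩
  · exact (P.finite_toSet.isCompact_convexHull ℝ).exists_dist_le_mul_norm hR₀ A
      fun w hw hAw => hP.subset ⟨hw, hAw⟩
  have hzR : z ∈ R := hPR ⟨hzP, hzA⟩
  have hfacet : ∀ q ∈ P, ∃ C ≥ 0, ∀ w ∈ convexHull ℝ (P.erase q : Set E), ∃ r ∈ R,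
      dist w r ≤ C * ‖A w‖ := fun q hq =>
    ih _ (Finset.erase_ssubset hq) <| (inter_subset_inter_left _ <| convexHull_mono <|
      Finset.coe_subset.2 <| P.erase_subset q).trans hPR
  choose! C hC₀ hC using hfacet
  refine ⟨∑ q ∈ P, C q, Finset.sum_nonneg hC₀, fun w hw => ?_⟩
  rcases eq_or_ne w z with rfl | hwz
  · exact ⟨w, hzR, by simpa using mul_nonneg (Finset.sum_nonneg hC₀) (norm_nonneg (A w))⟩
  obtain ⟨Λ, hΛ, q, hq, hwΛ⟩ := P.exists_lineMap_mem_convexHull_erase hzP hw hwz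
  obtain ⟨r, hr, hdist⟩ := hC q hq _ hwΛ
  have hΛ₀ : 0 < Λ := one_pos.trans_le hΛ
  have hw_eq : w = lineMap z (lineMap z w Λ) Λ⁻¹ := by
    rw [lineMap_lineMap_right, inv_mul_cancel₀ hΛ₀.ne', lineMap_apply_one]
  have hAΛ : A (lineMap z w Λ) = Λ • A w := by
    simp [lineMap_apply_module', hzA]
  refine ⟨lineMap z r Λ⁻¹, hR.lineMap_mem hzR hr ⟨by positivity, inv_le_one_of_one_le₀ hΛ⟩, ?_⟩
  have hscale : ∀ a b : E, dist (lineMap z a Λ⁻¹) (lineMap z b Λ⁻¹) = Λ⁻¹ * dist a b :=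
    fun a b => by
      simp [lineMap_apply_module', dist_eq_norm, ← smul_sub, norm_smul, abs_of_pos hΛ₀]
  calc dist w (lineMap z r Λ⁻¹) = Λ⁻¹ * dist (lineMap z w Λ) r := by rw [← hscale, ← hw_eq]
    _ ≤ Λ⁻¹ * (C q * ‖A (lineMap z w Λ)‖) := by gcongr
    _ = C q * ‖A w‖ := by
        rw [hAΛ, norm_smul, Real.norm_of_nonneg hΛ₀.le]
        field_simp
    _ ≤ (∑ q ∈ P, C q) * ‖A w‖ := by
        gcongr
        exact Finset.single_le_sum (fun q hq => hC₀ q hq) hq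

theorem Finset.exists_mem_convexHull_inter_dist_le (S T : Finset E)
    (hST : (convexHull ℝ (S : Set E) ∩ convexHull ℝ (T : Set E)).Nonempty) :
    ∃ C ≥ 0, ∀ x ∈ convexHull ℝ (S : Set E), ∀ y ∈ convexHull ℝ (T : Set E),
      ∃ x' ∈ convexHull ℝ (S : Set E) ∩ convexHull ℝ (T : Set E), dist x x' ≤ C * dist x y := by
  -- The error bound in `E × E` for `A (x, y) = x - y`, whose kernel meets `S × T` in the
  -- diagonal copy of the intersection.
  obtain ⟨C, hC₀, hC⟩ := exists_dist_le_mul_norm_of_convexHull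
    (ContinuousLinearMap.fst ℝ E E - ContinuousLinearMap.snd ℝ E E)
    (((convex_convexHull ℝ _).inter (convex_convexHull ℝ _)).prod convex_univ)
    (hST.prod Set.univ_nonempty) (S ×ˢ T) (by
      rintro ⟨x, y⟩ ⟨hxy, hA : x - y = 0⟩
      rw [Finset.coe_product, convexHull_prod] at hxy
      obtain rfl := sub_eq_zero.1 hA
      exact ⟨hxy, Set.mem_univ _⟩)
  refine ⟨C, hC₀, fun x hx y hy => ?_⟩
  obtain ⟨r, hr, hdist⟩ :=
    hC (x, y) (by rw [Finset.coe_product, convexHull_prod]; exact ⟨hx, hy⟩)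
  refine ⟨r.1, hr.1, (le_max_left _ _).trans (hdist.trans_eq ?_)⟩
  simp [dist_eq_norm]

end PolytopeErrorBound

section LipschitzJoinable

def LipschitzJoinable {X : Type*} [PseudoMetricSpace X] (S : Set X) (lam : ℝ) (x y : X) :
    Prop :=
  ∃ γ : ℝ → X, γ '' Icc (0 : ℝ) 1 ⊆ S ∧ γ 0 = x ∧ γ 1 = y ∧
    ∀ s ∈ Icc (0 : ℝ) 1, ∀ t ∈ Icc (0 : ℝ) 1, dist (γ s) (γ t) ≤ lam * dist x y * |s - t|

theorem LipschitzJoinable.mono {X : Type*} [PseudoMetricSpace X] {S T : Set X} {lam lam' : ℝ}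
    {x y : X} (h : LipschitzJoinable S lam x y) (hST : S ⊆ T) (hlam : lam ≤ lam') :
    LipschitzJoinable T lam' x y := by
  obtain ⟨γ, hγS, hγ0, hγ1, hγ⟩ := h
  refine ⟨γ, hγS.trans hST, hγ0, hγ1, fun s hs t ht => (hγ s hs t ht).trans ?_⟩
  gcongr

variable {E : Type*} [NormedAddCommGroup E] [NormedSpace ℝ E]

theorem Convex.lipschitzJoinable_union {A B : Set E} (hA : Convex ℝ A) (hB : Convex ℝ B)
    {x z y : E} (hx : x ∈ A) (hzA : z ∈ A) (hzB : z ∈ B) (hy : y ∈ B) {lam : ℝ}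
    (hxz : dist x z ≤ lam * dist x y) (hzy : dist z y ≤ lam * dist x y) :
    LipschitzJoinable (A ∪ B) (4 * lam) x y := by
  -- `γ` runs through `[x, z]` on `[0, 1/2]` and through `[z, y]` on `[1/2, 1]`.
  set γ : ℝ → E := fun s => x + min (2 * s) 1 • (z - x) + max (2 * s - 1) 0 • (y - z)
  refine ⟨γ, ?_, by simp [γ], by norm_num [γ], fun s _ t _ => ?_⟩
  · rintro _ ⟨s, hs, rfl⟩
    rcases le_or_gt s (1 / 2) with hs2 | hs2
    · have : γ s = lineMap x z (2 * s) := by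
        simp [γ, lineMap_apply_module', min_eq_left (by linarith : 2 * s ≤ 1),
          max_eq_right (by linarith : 2 * s - 1 ≤ 0)]
        exact add_comm _ _
      exact Or.inl (this ▸ hA.lineMap_mem hx hzA ⟨by linarith [hs.1], by linarith⟩)
    · have : γ s = lineMap z y (2 * s - 1) := by
        simp [γ, lineMap_apply_module', min_eq_right (by linarith : 1 ≤ 2 * s),
          max_eq_left (by linarith : 0 ≤ 2 * s - 1)]
        exact add_comm _ _
      exact Or.inr (this ▸ hB.lineMap_mem hzB hy ⟨by linarith, by linarith [hs.2]⟩)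
  · have h1 : |min (2 * s) 1 - min (2 * t) 1| ≤ 2 * |s - t| :=
      (abs_min_sub_min_le_max _ _ _ _).trans (by simp [← mul_sub, abs_mul])
    have h2 : |max (2 * s - 1) 0 - max (2 * t - 1) 0| ≤ 2 * |s - t| :=
      (abs_max_sub_max_le_max _ _ _ _).trans (by simp [← mul_sub, abs_mul])
    calc dist (γ s) (γ t)
        = ‖(min (2 * s) 1 - min (2 * t) 1) • (z - x)
            + (max (2 * s - 1) 0 - max (2 * t - 1) 0) • (y - z)‖ := by
          rw [dist_eq_norm]; congr 1; simp only [γ, sub_smul]; abel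
      _ ≤ |min (2 * s) 1 - min (2 * t) 1| * dist x z
            + |max (2 * s - 1) 0 - max (2 * t - 1) 0| * dist z y := by
          rw [dist_eq_norm', dist_eq_norm', ← Real.norm_eq_abs, ← Real.norm_eq_abs, ← norm_smul,
            ← norm_smul]
          exact norm_add_le _ _
      _ ≤ 2 * |s - t| * (lam * dist x y) + 2 * |s - t| * (lam * dist x y) := by
          gcongr
      _ = 4 * lam * dist x y * |s - t| := by ring

theorem Finset.eventually_lipschitzJoinable (S T : Finset E) :
    ∀ᶠ p : ℝ × ℝ in 𝓝[>] 0 ×ˢ atTop, ∀ x ∈ convexHull ℝ (S : Set E),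
      ∀ y ∈ convexHull ℝ (T : Set E), dist x y < p.1 →
        LipschitzJoinable (convexHull ℝ (S : Set E) ∪ convexHull ℝ (T : Set E)) p.2 x y := by
  rcases (convexHull ℝ (S : Set E) ∩ convexHull ℝ (T : Set E)).eq_empty_or_nonempty
    with hST | hST
  · obtain ⟨r, hr, hrST⟩ := exists_pos_forall_lt_edist (S.finite_toSet.isCompact_convexHull ℝ)
      (T.finite_toSet.isCompact_convexHull ℝ).isClosed (Set.disjoint_iff_inter_eq_empty.2 hST)
    refine (eventually_nhdsWithin_of_eventually_nhds
      (eventually_lt_nhds (NNReal.coe_pos.2 hr)) |>.prod_inl _).mono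
        fun p hp x hx y hy hxy => absurd (hrST x hx y hy) ?_
    rw [edist_nndist, ENNReal.coe_lt_coe, ← NNReal.coe_lt_coe, coe_nndist, not_lt]
    exact (hxy.trans hp).le
  · obtain ⟨C, hC₀, hC⟩ := S.exists_mem_convexHull_inter_dist_le T hST
    refine (eventually_ge_atTop (4 * (C + 1))).prod_inr _ |>.mono fun p hp x hx y hy _ => ?_
    obtain ⟨x', ⟨hx'S, hx'T⟩, hxx'⟩ := hC x hx y hy
    refine (Convex.lipschitzJoinable_union (convex_convexHull ℝ _) (convex_convexHull ℝ _)
      hx hx'S hx'T hy (lam := C + 1) ?_ ?_).mono subset_rfl hp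
    · nlinarith [dist_nonneg (x := x) (y := y)]
    · calc dist x' y ≤ dist x' x + dist x y := dist_triangle _ _ _
        _ ≤ (C + 1) * dist x y := by rw [dist_comm]; linarith

theorem exists_lipschitzJoinable_biUnion_convexHull {𝒮 : Set (Finset E)} (h𝒮 : 𝒮.Finite) :
    ∃ ε lam : ℝ, 0 < ε ∧ 1 ≤ lam ∧ ∀ x ∈ ⋃ s ∈ 𝒮, convexHull ℝ (s : Set E),
      ∀ y ∈ ⋃ s ∈ 𝒮, convexHull ℝ (s : Set E), dist x y < ε →
        LipschitzJoinable (⋃ s ∈ 𝒮, convexHull ℝ (s : Set E)) lam x y := by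
  obtain ⟨⟨ε, lam⟩, ⟨hε, hlam⟩, hpairs⟩ := ((eventually_mem_nhdsWithin.prod_mk
    (eventually_ge_atTop 1)).and ((h𝒮.prod h𝒮).eventually_all.2
      fun st _ => Finset.eventually_lipschitzJoinable st.1 st.2)).exists
  refine ⟨ε, lam, hε, hlam, fun x hx y hy hxy => ?_⟩
  obtain ⟨s, hs, hxs⟩ := mem_iUnion₂.1 hx
  obtain ⟨t, ht, hyt⟩ := mem_iUnion₂.1 hy
  have hsub : ∀ u ∈ 𝒮, convexHull ℝ (u : Set E) ⊆ ⋃ s ∈ 𝒮, convexHull ℝ (s : Set E) :=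
    fun u hu => subset_biUnion_of_mem (u := fun s : Finset E => convexHull ℝ (s : Set E)) hu
  exact (hpairs (s, t) ⟨hs, ht⟩ x hxs y hyt hxy).mono
    (union_subset (hsub s hs) (hsub t ht)) le_rfl

end LipschitzJoinable

/-- Let `K` be a finite simplicial complex in `ℝⁿ` with underlying
polyhedron `X = K.space`. Then there exist `ε > 0` and `λ ≥ 1` such that any two points
`x, y ∈ X` with `|x − y| < ε` can be joined by a curve `γ : [0,1] → X` which is Lipschitz
with constant at most `λ|x − y|` (in particular of length at most `λ|x − y|`). -/
theorem finite_simplicial_complex_locally_quasiconvex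
    (n : ℕ) (K : Geometry.SimplicialComplex ℝ (EuclideanSpace ℝ (Fin n)))
    (hfin : K.faces.Finite) :
    ∃ (ε lam : ℝ), 0 < ε ∧ 1 ≤ lam ∧
      ∀ x ∈ K.space, ∀ y ∈ K.space, dist x y < ε →
        ∃ γ : ℝ → EuclideanSpace ℝ (Fin n),
          γ '' Set.Icc (0 : ℝ) 1 ⊆ K.space ∧ γ 0 = x ∧ γ 1 = y ∧
          ∀ s ∈ Set.Icc (0 : ℝ) 1, ∀ t ∈ Set.Icc (0 : ℝ) 1,
            dist (γ s) (γ t) ≤ lam * dist x y * |s - t| :=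
  exists_lipschitzJoinable_biUnion_convexHull hfin
end

section
/- Let n ≥ 2, let μ be a finite Borel measure on ℝⁿ, let u : ℝⁿ → [0,∞] be Borel, and let r > 0. Then ∫_{B(0,r)} ( ∫_0^1 ∫_{ℝⁿ} u(z + t x) dμ(z) dt ) dx ≤ (n−1)^{-1} r^{n−1} ∫_{ℝⁿ} I_r(u)(y) dμ(y). -/
/-!
Substituting `y = t • x` gives `∫_{B(0,r)} f (t x) dx = t⁻ⁿ ∫_{B(0,tr)} f`, so by Tonelli the
left-hand side at a fixed point `z` equals `∫ f (z + y) K(|y|) dy` with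
`K(b) = ∫_{b/r}^1 t⁻ⁿ dt ≤ (n-1)⁻¹ (r/b)^(n-1)`, which is the truncated Riesz kernel up to the
constant. Integrating over `z` against `μ` (Tonelli once more) gives the estimate.
-/

open MeasureTheory Metric Set ENNReal Module
open scoped Pointwise

theorem inv_natCast_sub_one_mul_ofReal_pow_ne_top {d : ℕ} (hd : 2 ≤ d) (r : ℝ) :
    ((d : ℝ≥0∞) - 1)⁻¹ * ENNReal.ofReal r ^ (d - 1) ≠ ∞ :=
  ENNReal.mul_ne_top
    (ENNReal.inv_ne_top.2 (tsub_pos_of_lt (by exact_mod_cast hd : (1 : ℝ≥0∞) < d)).ne')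
    (ENNReal.pow_ne_top ENNReal.ofReal_ne_top)

theorem lintegral_Ioi_inv_pow {d : ℕ} (hd : 2 ≤ d) {a : ℝ} (ha : 0 < a) :
    ∫⁻ t in Ioi a, ENNReal.ofReal (t ^ d)⁻¹ = ENNReal.ofReal ((a ^ (d - 1))⁻¹ / (d - 1 : ℕ)) := by
  have hd' : ((d - 1 : ℕ) : ℝ) = d - 1 := by push_cast [Nat.cast_sub (by omega : 1 ≤ d)]; ring
  have hexp : -(d : ℝ) < -1 := by
    have : (2 : ℝ) ≤ d := by exact_mod_cast hd
    linarith
  have hpow : a ^ (-(d : ℝ) + 1) = (a ^ (d - 1))⁻¹ := by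
    rw [show -(d : ℝ) + 1 = -↑(d - 1 : ℕ) by rw [hd']; ring, Real.rpow_neg ha.le,
      Real.rpow_natCast]
  calc ∫⁻ t in Ioi a, ENNReal.ofReal (t ^ d)⁻¹
      = ∫⁻ t in Ioi a, ENNReal.ofReal (t ^ (-(d : ℝ))) :=
        setLIntegral_congr_fun measurableSet_Ioi fun t ht => by
          rw [Real.rpow_neg (ha.trans ht).le, Real.rpow_natCast]
    _ = ENNReal.ofReal (∫ t in Ioi a, t ^ (-(d : ℝ))) :=
        (ofReal_integral_eq_lintegral_ofReal (integrableOn_Ioi_rpow_of_lt hexp ha)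
          ((ae_restrict_mem measurableSet_Ioi).mono fun t ht =>
            Real.rpow_nonneg (ha.trans ht).le _)).symm
    _ = _ := by
      rw [integral_Ioi_rpow_of_lt hexp ha, hpow, hd', show -(d : ℝ) + 1 = -(d - 1) by ring,
        neg_div_neg_eq]

theorem lintegral_Ioc_indicator_Ioi_inv_pow_le {d : ℕ} (hd : 2 ≤ d) {r b : ℝ} (hr : 0 < r)
    (hb : 0 ≤ b) :
    ∫⁻ t in Ioc 0 1, (Ioi (b / r)).indicator (fun t => ENNReal.ofReal (t ^ d)⁻¹) t ≤
      (Iio r).indicator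
        (fun b => ((d : ℝ≥0∞) - 1)⁻¹ * ENNReal.ofReal r ^ (d - 1) / ENNReal.ofReal b ^ (d - 1))
        b := by
  rw [setLIntegral_indicator measurableSet_Ioi]
  by_cases hbr : b < r
  · rw [indicator_of_mem (mem_Iio.2 hbr)]
    rcases hb.eq_or_lt with rfl | hb
    · rw [ENNReal.ofReal_zero, zero_pow (by omega), ENNReal.div_zero]
      · exact le_top
      · exact mul_ne_zero (ENNReal.inv_ne_zero.2 (ENNReal.sub_ne_top (natCast_ne_top d)))
          (pow_ne_zero _ (ENNReal.ofReal_pos.2 hr).ne')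
    calc ∫⁻ t in Ioi (b / r) ∩ Ioc 0 1, ENNReal.ofReal (t ^ d)⁻¹
        ≤ ∫⁻ t in Ioi (b / r), ENNReal.ofReal (t ^ d)⁻¹ := lintegral_mono_set inter_subset_left
      _ = ENNReal.ofReal ((d - 1 : ℕ) : ℝ)⁻¹ * ENNReal.ofReal (r ^ (d - 1)) /
            ENNReal.ofReal (b ^ (d - 1)) := by
        rw [lintegral_Ioi_inv_pow hd (div_pos hb hr), ← ENNReal.ofReal_mul (by positivity),
          ← ENNReal.ofReal_div_of_pos (by positivity), div_pow]
        congr 1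
        field_simp
      _ = _ := by
        rw [ENNReal.ofReal_inv_of_pos (Nat.cast_pos.2 (by omega)), ofReal_natCast,
          ENNReal.natCast_sub, Nat.cast_one, ENNReal.ofReal_pow hr.le, ENNReal.ofReal_pow hb.le]
  · rw [indicator_of_notMem (fun h => hbr (mem_Iio.1 h)), nonpos_iff_eq_zero, inter_comm,
      Ioc_inter_Ioi, Ioc_eq_empty, Measure.restrict_empty, lintegral_zero_measure]
    rw [not_lt, le_max_iff, one_le_div hr]
    exact Or.inr (not_lt.1 hbr)

section AddHaar

variable {E : Type*} [NormedAddCommGroup E] [NormedSpace ℝ E] [MeasurableSpace E] [BorelSpace E]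
  [FiniteDimensional ℝ E] (ν : Measure E) [ν.IsAddHaarMeasure]

theorem setLIntegral_comp_smul_of_pos (f : E → ℝ≥0∞) {t : ℝ} (s : Set E) (ht : 0 < t) :
    ∫⁻ x in s, f (t • x) ∂ν = ENNReal.ofReal (t ^ finrank ℝ E)⁻¹ * ∫⁻ y in t • s, f y ∂ν := by
  let e : E ≃ᵐ E := MeasurableEquiv.smul₀ t ht.ne'
  have hs : e ⁻¹' (t • s) = s := by
    ext x; simp [e, MeasurableEquiv.smul₀, smul_mem_smul_set_iff₀ ht.ne']
  calc ∫⁻ x in s, f (t • x) ∂ν = ∫⁻ x in e ⁻¹' (t • s), f (e x) ∂ν := by rw [hs]; rfl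
    _ = ∫⁻ y in t • s, f y ∂(ν.map (t • ·)) := by
      rw [← lintegral_map_equiv, ← e.restrict_map]; rfl
    _ = _ := by
      rw [Measure.map_addHaar_smul ν ht.ne', Measure.restrict_smul, lintegral_smul_measure,
        abs_of_pos (by positivity), smul_eq_mul]

theorem lintegral_ball_lintegral_Icc_comp_smul_eq {f : E → ℝ≥0∞} (hf : Measurable f) {r : ℝ}
    (hr : 0 < r) :
    ∫⁻ x in ball 0 r, (∫⁻ t in Icc (0 : ℝ) 1, f (t • x)) ∂ν =
      ∫⁻ y, f y * (∫⁻ t in Ioc (0 : ℝ) 1,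
        (Ioi (‖y‖ / r)).indicator (fun t => ENNReal.ofReal (t ^ finrank ℝ E)⁻¹) t) ∂ν := by
  set g : ℝ → ℝ≥0∞ := fun t => ENNReal.ofReal (t ^ finrank ℝ E)⁻¹
  have hg : Measurable g := (measurable_id.pow_const _).inv.ennreal_ofReal
  have hf_smul : Measurable fun p : E × ℝ => f (p.2 • p.1) :=
    hf.comp (measurable_snd.smul measurable_fst)
  have hf_kernel : Measurable fun p : ℝ × E => f p.2 * (Ioi (‖p.2‖ / r)).indicator g p.1 :=
    (hf.comp measurable_snd).mul (Measurable.ite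
      (measurableSet_lt (measurable_snd.norm.div_const r) measurable_fst)
      (hg.comp measurable_fst) measurable_const)
  calc ∫⁻ x in ball 0 r, (∫⁻ t in Icc (0 : ℝ) 1, f (t • x)) ∂ν
      = ∫⁻ t in Ioc (0 : ℝ) 1, ∫⁻ x in ball 0 r, f (t • x) ∂ν := by
        rw [lintegral_lintegral_swap hf_smul.aemeasurable,
          Measure.restrict_congr_set Ioc_ae_eq_Icc]
    _ = ∫⁻ t in Ioc (0 : ℝ) 1, ∫⁻ y, f y * (Ioi (‖y‖ / r)).indicator g t ∂ν :=
        setLIntegral_congr_fun measurableSet_Ioc fun t ht => by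
          rw [setLIntegral_comp_smul_of_pos ν f _ ht.1, _root_.smul_ball ht.1.ne', smul_zero,
            Real.norm_of_nonneg ht.1.le, ← lintegral_indicator measurableSet_ball,
            ← lintegral_const_mul' _ _ ofReal_ne_top]
          refine lintegral_congr fun y => ?_
          by_cases hy : ‖y‖ < t * r
          · rw [indicator_of_mem (mem_ball_zero_iff.2 hy),
              indicator_of_mem (show t ∈ Ioi (‖y‖ / r) from (div_lt_iff₀ hr).2 hy), mul_comm]
          · rw [indicator_of_notMem (mt mem_ball_zero_iff.1 hy),
              indicator_of_notMem (show t ∉ Ioi (‖y‖ / r) from mt (div_lt_iff₀ hr).1 hy),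
              mul_zero, mul_zero]
    _ = _ := by
        rw [lintegral_lintegral_swap hf_kernel.aemeasurable]
        exact lintegral_congr fun y => lintegral_const_mul _ (hg.indicator measurableSet_Ioi)

theorem lintegral_ball_lintegral_Icc_comp_smul_le (hd : 2 ≤ finrank ℝ E) {f : E → ℝ≥0∞}
    (hf : Measurable f) {r : ℝ} (hr : 0 < r) :
    ∫⁻ x in ball 0 r, (∫⁻ t in Icc (0 : ℝ) 1, f (t • x)) ∂ν ≤
      ((finrank ℝ E : ℝ≥0∞) - 1)⁻¹ * ENNReal.ofReal r ^ (finrank ℝ E - 1) *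
        ∫⁻ y in ball 0 r, f y / ENNReal.ofReal ‖y‖ ^ (finrank ℝ E - 1) ∂ν := by
  set d := finrank ℝ E
  set C := ((d : ℝ≥0∞) - 1)⁻¹ * ENNReal.ofReal r ^ (d - 1)
  rw [lintegral_ball_lintegral_Icc_comp_smul_eq ν hf hr,
    ← lintegral_const_mul' _ _ (inv_natCast_sub_one_mul_ofReal_pow_ne_top hd r),
    ← lintegral_indicator measurableSet_ball]
  refine lintegral_mono fun y => ?_
  have hk := lintegral_Ioc_indicator_Ioi_inv_pow_le hd hr (norm_nonneg y)
  by_cases hy : y ∈ ball 0 r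
  · rw [indicator_of_mem (mem_Iio.2 (mem_ball_zero_iff.1 hy))] at hk
    calc _ ≤ f y * (C / ENNReal.ofReal ‖y‖ ^ (d - 1)) := by gcongr
      _ = _ := by rw [indicator_of_mem hy, ← mul_div_assoc, ← mul_div_assoc, mul_comm]
  · rw [indicator_of_notMem (fun h => hy (mem_ball_zero_iff.2 (mem_Iio.1 h))),
      nonpos_iff_eq_zero] at hk
    rw [indicator_of_notMem hy, hk, mul_zero]

theorem lintegral_ball_lintegral_Icc_add_smul_le (hd : 2 ≤ finrank ℝ E) {f : E → ℝ≥0∞}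
    (hf : Measurable f) {r : ℝ} (hr : 0 < r) (z : E) :
    ∫⁻ x in ball 0 r, (∫⁻ t in Icc (0 : ℝ) 1, f (z + t • x)) ∂ν ≤
      ((finrank ℝ E : ℝ≥0∞) - 1)⁻¹ * ENNReal.ofReal r ^ (finrank ℝ E - 1) *
        ∫⁻ y in ball z r, f y / ENNReal.ofReal (dist y z) ^ (finrank ℝ E - 1) ∂ν := by
  have hpre : (z + ·) ⁻¹' ball z r = ball 0 r := by
    ext x; simp
  refine (lintegral_ball_lintegral_Icc_comp_smul_le ν hd (hf.comp (measurable_const_add z))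
    hr).trans_eq ?_
  congr 1
  conv_rhs => rw [← (measurePreserving_add_left ν z).setLIntegral_comp_preimage_emb
    (measurableEmbedding_addLeft z), hpre]
  simp only [Function.comp_apply, dist_self_add_left]

end AddHaar

/-- For `n ≥ 2`, a finite Borel measure `μ` on `ℝⁿ`, a Borel function
`u : ℝⁿ → [0,∞]` and `r > 0`,
`∫_{B(0,r)} ∫_0^1 ∫ u(z + t x) dμ(z) dt dx ≤ (n−1)⁻¹ r^{n−1} ∫ I_r(u)(y) dμ(y)`,
where `I_r(u)(y) = ∫_{B(y,r)} u(x) |x−y|^{-(n-1)} dx` is the truncated Riesz potential. -/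
theorem riesz_potential_translation_estimate
    (n : ℕ) (hn : 2 ≤ n) (μ : Measure (EuclideanSpace ℝ (Fin n))) [IsFiniteMeasure μ]
    (u : EuclideanSpace ℝ (Fin n) → ℝ≥0∞) (hu : Measurable u) (r : ℝ) (hr : 0 < r) :
    (∫⁻ x in Metric.ball (0 : EuclideanSpace ℝ (Fin n)) r,
        ∫⁻ t in Set.Icc (0 : ℝ) 1, ∫⁻ z, u (z + t • x) ∂μ) ≤
      ((n : ℝ≥0∞) - 1)⁻¹ * ENNReal.ofReal r ^ (n - 1) *
        ∫⁻ y, (∫⁻ x in Metric.ball y r, u x / ENNReal.ofReal (dist x y) ^ (n - 1)) ∂μ := by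
  have hu_add : Measurable fun p : (EuclideanSpace ℝ (Fin n) × EuclideanSpace ℝ (Fin n)) × ℝ =>
      u (p.1.2 + p.2 • p.1.1) :=
    hu.comp (measurable_fst.snd.add (measurable_snd.smul measurable_fst.fst))
  calc (∫⁻ x in ball 0 r, ∫⁻ t in Icc (0 : ℝ) 1, ∫⁻ z, u (z + t • x) ∂μ)
      = ∫⁻ x in ball 0 r, ∫⁻ z, (∫⁻ t in Icc (0 : ℝ) 1, u (z + t • x)) ∂μ :=
        lintegral_congr fun x => lintegral_lintegral_swap
          (hu.comp (measurable_snd.add (measurable_fst.smul measurable_const))).aemeasurable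
    _ = ∫⁻ z, (∫⁻ x in ball 0 r, ∫⁻ t in Icc (0 : ℝ) 1, u (z + t • x)) ∂μ :=
        lintegral_lintegral_swap hu_add.lintegral_prod_right'.aemeasurable
    _ ≤ ∫⁻ z, ((n : ℝ≥0∞) - 1)⁻¹ * ENNReal.ofReal r ^ (n - 1) *
          (∫⁻ x in ball z r, u x / ENNReal.ofReal (dist x z) ^ (n - 1)) ∂μ :=
        lintegral_mono fun z => by
          simpa only [finrank_euclideanSpace_fin] using lintegral_ball_lintegral_Icc_add_smul_le
            volume (by rwa [finrank_euclideanSpace_fin]) hu hr z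
    _ = _ := lintegral_const_mul' _ _ (inv_natCast_sub_one_mul_ofReal_pow_ne_top hn r)
end

section
/- Let n ≥ 2, let μ and σ be finite Borel measures on ℝⁿ, let K denote the support of μ, and let r > 0, t ≥ 1 and A > 0. For each integer j ≥ 0 set N_j = { x ∈ ℝⁿ : 2^{-j} r / t < dist(x, K) < 2^{-j} r }. Assume that for every y ∈ K and every integer j ≥ 0, σ( (B(y, 2^{-j} r) \ closedB(y, 2^{-j-1} r)) ∩ N_j ) ≥ A 2^{-j} r μ(B(y, 2^{-j+1} r)). Then there exists a constant C depending only on n and A such that for every Borel function h : ℝⁿ → [0,∞], ∫_{ℝⁿ} I_r(h)(y) dμ(y) ≤ C ∫_{{x : dist(x, K) < r}} Mh(x) dσ(x). -/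
open MeasureTheory Metric Set ENNReal

/-- The (centered) Hardy–Littlewood maximal function of `f : ℝⁿ → [0,∞]`:
`Mf(x) = sup_{ρ>0} λⁿ(B(x,ρ))⁻¹ ∫_{B(x,ρ)} f dλⁿ`. -/
noncomputable def maximalFn {n : ℕ} (f : EuclideanSpace ℝ (Fin n) → ℝ≥0∞)
    (x : EuclideanSpace ℝ (Fin n)) : ℝ≥0∞ :=
  ⨆ (ρ : ℝ) (_ : 0 < ρ), (volume (Metric.ball x ρ))⁻¹ * ∫⁻ y in Metric.ball x ρ, f y

/-- The support of a Borel measure `μ` on `ℝⁿ`: the set of points all of whose balls have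
positive measure. -/
def measSupport {n : ℕ} (μ : Measure (EuclideanSpace ℝ (Fin n))) :
    Set (EuclideanSpace ℝ (Fin n)) :=
  {x | ∀ ρ : ℝ, 0 < ρ → 0 < μ (Metric.ball x ρ)}

/-!
Write `r_k = r / 2^k`. Splitting `B(y,r)` into the annuli `r_{k+1} ≤ |x - y| < r_k` gives
`I_r h(y) ≤ 2^{n-1} |B_1| ∑_k r_k ⨍_{B(y,r_k)} h`, and cutting each average into dyadic level
sets reduces the theorem to the bound, for every level `t`,
`∑_k r_k μ{y ∈ K : ⨍_{B(y,r_k)} h ≥ t} ≤ (2/A) σ({dist(·,K) < r} ∩ {2ⁿ M h ≥ t})`.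
To prove it, select centres greedily, coarse scales first, so that the balls `B(z, r_k)` are
pairwise disjoint while the balls `B(z, 2 r_k)` cover the level sets. The hypothesis turns
`r_k μ(B(z, 2 r_k))` into `σ(B(z, r_k) ∩ {dist(·,K) < r}) / A`, the disjointness adds these
`σ`-masses up, and at every point of `B(z, r_k)` the maximal function of `h` is at least
`2⁻ⁿ t`. Summing over the levels gives back `∫ M h dσ`.
-/

open Module

section DyadicLayerCake

theorem tsum_ite_le_two_zpow (l : ℤ) :
    ∑' m : ℤ, (if m ≤ l then (2 : ℝ≥0∞) ^ m else 0) = 2 ^ (l + 1) := by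
  have hsupp : Function.support (fun m : ℤ => if m ≤ l then (2 : ℝ≥0∞) ^ m else 0) ⊆
      range fun i : ℕ => l - i := fun m hm => ⟨(l - m).toNat, by
        have : m ≤ l := by by_contra h; exact hm (if_neg h)
        simp only; omega⟩
  rw [← (sub_right_injective.comp Nat.cast_injective).tsum_eq hsupp]
  have hterm (i : ℕ) : (if l - (i : ℤ) ≤ l then (2 : ℝ≥0∞) ^ (l - (i : ℤ)) else 0) =
      2 ^ l * 2⁻¹ ^ i := by
    rw [if_pos (by omega), ENNReal.zpow_sub two_ne_zero ofNat_ne_top, zpow_natCast,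
      ENNReal.inv_pow]
  simp only [Function.comp_apply, hterm, ENNReal.tsum_mul_left, ENNReal.tsum_geometric_two,
    ENNReal.zpow_add two_ne_zero ofNat_ne_top, zpow_one]

theorem tsum_indicator_Ici_two_zpow_mem_Icc (a : ℝ≥0∞) :
    ∑' m : ℤ, (Ici ((2 : ℝ≥0∞) ^ m)).indicator (fun _ => (2 : ℝ≥0∞) ^ m) a ∈ Icc a (2 * a) := by
  rcases eq_or_ne a 0 with rfl | ha0
  · simp
  rcases eq_or_ne a ∞ with rfl | hatop
  · suffices ∑' m : ℤ, (2 : ℝ≥0∞) ^ m = ∞ by simp [this]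
    refine top_unique <| (ENNReal.tsum_comp_le_tsum_of_injective Nat.cast_injective _).trans' ?_
    calc ∞ = ∑' _ : ℕ, (1 : ℝ≥0∞) := (ENNReal.tsum_const_eq_top_of_ne_zero one_ne_zero).symm
      _ ≤ ∑' n : ℕ, (2 : ℝ≥0∞) ^ (n : ℤ) :=
        ENNReal.tsum_le_tsum fun n => by simpa using one_le_pow₀ (M₀ := ℝ≥0∞) one_le_two
  obtain ⟨l, hla, hal⟩ := exists_mem_Ico_zpow ha0 hatop one_lt_two ofNat_ne_top
  have hterm (m : ℤ) : (Ici ((2 : ℝ≥0∞) ^ m)).indicator (fun _ => (2 : ℝ≥0∞) ^ m) a =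
      if m ≤ l then 2 ^ m else 0 := by
    by_cases hml : m ≤ l
    · rw [if_pos hml,
        indicator_of_mem (mem_Ici.2 ((ENNReal.zpow_le_of_le one_le_two hml).trans hla))]
    · rw [if_neg hml, indicator_of_notMem fun hm : a ∈ Ici (2 ^ m) =>
        (hal.trans_le ((ENNReal.zpow_le_of_le one_le_two (by omega)).trans hm)).false]
  rw [tsum_congr hterm, tsum_ite_le_two_zpow]
  refine ⟨hal.le, ?_⟩
  rw [ENNReal.zpow_add two_ne_zero ofNat_ne_top, zpow_one, mul_comm]
  gcongr

variable {α : Type*} [MeasurableSpace α] {ν : Measure α} {f : α → ℝ≥0∞}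

theorem tsum_two_zpow_mul_measure_eq_lintegral (hf : Measurable f) :
    ∑' m : ℤ, 2 ^ m * ν {x | 2 ^ m ≤ f x} =
      ∫⁻ x, ∑' m : ℤ, (Ici ((2 : ℝ≥0∞) ^ m)).indicator (fun _ => (2 : ℝ≥0∞) ^ m) (f x) ∂ν := by
  rw [lintegral_tsum (f := fun m x => (Ici ((2 : ℝ≥0∞) ^ m)).indicator (fun _ => 2 ^ m) (f x))
    fun m => ((measurable_const.indicator measurableSet_Ici).comp hf).aemeasurable]
  congr with m
  exact (lintegral_indicator_const (hf measurableSet_Ici) _).symm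

theorem lintegral_le_tsum_two_zpow_mul_measure (hf : Measurable f) :
    ∫⁻ x, f x ∂ν ≤ ∑' m : ℤ, 2 ^ m * ν {x | 2 ^ m ≤ f x} := by
  rw [tsum_two_zpow_mul_measure_eq_lintegral hf]
  exact lintegral_mono fun x => (tsum_indicator_Ici_two_zpow_mem_Icc (f x)).1

theorem tsum_two_zpow_mul_measure_le_two_mul_lintegral (hf : Measurable f) :
    ∑' m : ℤ, 2 ^ m * ν {x | 2 ^ m ≤ f x} ≤ 2 * ∫⁻ x, f x ∂ν := by
  rw [tsum_two_zpow_mul_measure_eq_lintegral hf, ← lintegral_const_mul' _ _ ofNat_ne_top]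
  exact lintegral_mono fun x => (tsum_indicator_Ici_two_zpow_mem_Icc (f x)).2

end DyadicLayerCake

section Covering

variable {X : Type*} [PseudoMetricSpace X]

theorem exists_separated_subset_forall_dist_lt (D : Set X) {δ : ℝ} (hδ : 0 < δ) :
    ∃ u ⊆ D, u.Pairwise (fun a b => δ ≤ dist a b) ∧ ∀ y ∈ D, ∃ z ∈ u, dist y z < δ := by
  obtain ⟨u, hu⟩ := zorn_subset {u | u ⊆ D ∧ u.Pairwise fun a b => δ ≤ dist a b}
    fun c hcS hc => ⟨⋃₀ c, ⟨sUnion_subset fun s hs => (hcS hs).1,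
      hc.pairwise_sUnion.2 fun s hs => (hcS hs).2⟩, fun _ => subset_sUnion_of_mem⟩
  refine ⟨u, hu.prop.1, hu.prop.2, fun y hy => ?_⟩
  by_contra! hfar
  have hyu : y ∉ u := fun h => (hfar y h).not_gt (by simpa using hδ)
  have hins : insert y u = u := hu.eq_of_subset
    ⟨insert_subset hy hu.prop.1,
      hu.prop.2.insert fun z hz _ => ⟨hfar z hz, dist_comm y z ▸ hfar z hz⟩⟩
    (subset_insert y u) |>.symm
  exact hyu (hins ▸ mem_insert y u)

theorem exists_stagewise_separated (C : ℕ → Set X) {δ : ℕ → ℝ} (hδ : ∀ k, 0 < δ k) :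
    ∃ S : ℕ → Set X, (∀ k, S k ⊆ C k) ∧
      (∀ k, ∀ y ∈ C k, ∃ j ≤ k, ∃ z ∈ S j, dist y z < δ j) ∧
      ∀ j k, j ≤ k → ∀ z ∈ S j, ∀ z' ∈ S k, (j, z) ≠ (k, z') → δ j ≤ dist z z' := by
  choose sep hsepD hsep hcov using
    fun k (D : Set X) => exists_separated_subset_forall_dist_lt D (hδ k)
  let covered : ℕ → Set X :=
    fun k => Nat.rec ∅ (fun k U => U ∪ ⋃ z ∈ sep k (C k \ U), ball z (δ k)) k
  let S k := sep k (C k \ covered k)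
  have covered_succ k : covered (k + 1) = covered k ∪ ⋃ z ∈ S k, ball z (δ k) := rfl
  have mem_covered k y : y ∈ covered k ↔ ∃ j < k, ∃ z ∈ S j, dist y z < δ j := by
    induction k with
    | zero => simp [covered]
    | succ k ih =>
      simp only [covered_succ, mem_union, ih, mem_iUnion₂, mem_ball, Nat.lt_succ_iff_lt_or_eq,
        or_and_right, exists_or, exists_eq_left, exists_prop]
  refine ⟨S, fun k => (hsepD k _).trans sdiff_subset, fun k y hy => ?_,
    fun j k hjk z hz z' hz' hne => ?_⟩
  · rcases em (y ∈ covered k) with hyc | hyc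
    · obtain ⟨j, hj, h⟩ := (mem_covered k y).1 hyc
      exact ⟨j, hj.le, h⟩
    · obtain ⟨z, hz, hd⟩ := hcov k (C k \ covered k) y ⟨hy, hyc⟩
      exact ⟨k, le_rfl, z, hz, hd⟩
  · rcases hjk.lt_or_eq with hjk | rfl
    · by_contra! hd
      exact (hsepD k _ hz').2 ((mem_covered k z').2 ⟨j, hjk, z, hz, by rwa [dist_comm]⟩)
    · exact hsep j _ hz hz' fun h => hne (by rw [h])

/-- Unlike in Vitali's covering lemma, the covering balls are enlarged only by the factor `2`
that the hypothesis of the main theorem controls, since the covered measure need not be doubling;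
the price is that coarse scales are selected first. -/
theorem exists_pairwiseDisjoint_balls_covering (C : ℕ → Set X) {ρ : ℕ → ℝ} (hρ : Antitone ρ)
    (hρ0 : ∀ k, 0 < ρ k) :
    ∃ P : Set (ℕ × X), (∀ p ∈ P, p.2 ∈ C p.1) ∧ P.PairwiseDisjoint (fun p => ball p.2 (ρ p.1)) ∧
      ∀ k, ∀ y ∈ C k, ∃ p ∈ P, p.1 ≤ k ∧ dist y p.2 < 2 * ρ p.1 := by
  obtain ⟨S, hSC, hcov, hsep⟩ :=
    exists_stagewise_separated C (δ := fun k => 2 * ρ k) fun k => by linarith [hρ0 k]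
  refine ⟨{p | p.2 ∈ S p.1}, fun p hp => hSC p.1 hp, ?_, fun k y hy => ?_⟩
  · rintro ⟨j, z⟩ hz ⟨k, z'⟩ hz' hne
    wlog hjk : j ≤ k generalizing j z k z'
    · exact (this k z' hz' j z hz hne.symm (by omega)).symm
    refine ball_disjoint_ball ?_
    linarith [hsep j k hjk z hz z' hz' hne, hρ hjk]
  · obtain ⟨j, hj, z, hz, hd⟩ := hcov k y hy
    exact ⟨(j, z), hz, hj, hd⟩

end Covering

theorem antitone_div_two_pow {r : ℝ} (hr : 0 ≤ r) : Antitone fun k : ℕ => r / 2 ^ k :=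
  fun _ _ hjk => div_le_div_of_nonneg_left hr (by positivity) (pow_le_pow_right₀ one_le_two hjk)

theorem tsum_ite_le_ofReal_div_two_pow (r : ℝ) (j : ℕ) :
    ∑' k : ℕ, (if j ≤ k then ENNReal.ofReal (r / 2 ^ k) else 0) =
      2 * ENNReal.ofReal (r / 2 ^ j) := by
  rw [← ENNReal.summable.sum_add_tsum_nat_add' (k := j),
    Finset.sum_eq_zero fun i hi => if_neg (by simp at hi; omega), zero_add]
  have hterm (i : ℕ) : (if j ≤ i + j then ENNReal.ofReal (r / 2 ^ (i + j)) else 0) =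
      ENNReal.ofReal (r / 2 ^ j) * 2⁻¹ ^ i := by
    rw [if_pos (by omega), show r / 2 ^ (i + j) = r / 2 ^ j * 2⁻¹ ^ i by
      rw [inv_pow, ← div_eq_mul_inv, div_div, pow_add, mul_comm],
      ENNReal.ofReal_mul' (by positivity), ENNReal.ofReal_pow (by norm_num),
      ENNReal.ofReal_inv_of_pos two_pos, ENNReal.ofReal_ofNat]
  rw [tsum_congr hterm, ENNReal.tsum_mul_left, ENNReal.tsum_geometric_two, mul_comm]

section Selection

variable {X : Type*} [PseudoMetricSpace X] [TopologicalSpace.SeparableSpace X] [MeasurableSpace X]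
  [OpensMeasurableSpace X]

theorem tsum_ofReal_div_two_pow_mul_measure_le (μ σ : Measure X) (C : ℕ → Set X) {T : Set X}
    (hT : MeasurableSet T) {r A : ℝ} (hr : 0 < r) (hA : 0 < A)
    (hyp : ∀ k, ∀ y ∈ C k, ENNReal.ofReal (A * (r / 2 ^ k)) * μ (ball y (2 * (r / 2 ^ k))) ≤
      σ (ball y (r / 2 ^ k) ∩ T)) :
    ∑' k, ENNReal.ofReal (r / 2 ^ k) * μ (C k) ≤
      2 * (ENNReal.ofReal A)⁻¹ * σ (T ∩ ⋃ k, ⋃ y ∈ C k, ball y (r / 2 ^ k)) := by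
  set ρ : ℕ → ℝ := fun k => r / 2 ^ k
  have hρ0 k : 0 < ρ k := by positivity
  obtain ⟨P, hPC, hdisj, hcov⟩ :=
    exists_pairwiseDisjoint_balls_covering C (antitone_div_two_pow hr.le) hρ0
  have hP : P.Countable :=
    hdisj.countable_of_isOpen (fun _ _ => isOpen_ball) fun p _ => nonempty_ball.2 (hρ0 p.1)
  have := hP.to_subtype
  let B₂ (p : P) := ball p.1.2 (2 * ρ p.1.1)
  have hμC k : μ (C k) ≤ ∑' p : P, if p.1.1 ≤ k then μ (B₂ p) else 0 := by
    calc μ (C k) ≤ μ (⋃ p : P, if p.1.1 ≤ k then B₂ p else ∅) := measure_mono fun y hy => by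
          obtain ⟨p, hp, hpk, hd⟩ := hcov k y hy
          exact mem_iUnion.2 ⟨⟨p, hp⟩, by simpa [B₂, hpk] using hd⟩
      _ ≤ _ := (measure_iUnion_le _).trans (ENNReal.tsum_le_tsum fun p => by split_ifs <;> simp)
  have hball (p : P) : ENNReal.ofReal (ρ p.1.1) * μ (B₂ p) ≤
      (ENNReal.ofReal A)⁻¹ * σ (ball p.1.2 (ρ p.1.1) ∩ T) := by
    have h := hyp p.1.1 p.1.2 (hPC p p.2)
    rwa [ENNReal.ofReal_mul hA.le, mul_assoc,
      ENNReal.mul_le_iff_le_inv (by simpa using hA) ofReal_ne_top] at h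
  calc ∑' k, ENNReal.ofReal (ρ k) * μ (C k)
      ≤ ∑' k, ∑' p : P, if p.1.1 ≤ k then ENNReal.ofReal (ρ k) * μ (B₂ p) else 0 := by
        refine ENNReal.tsum_le_tsum fun k => (mul_le_mul_right (hμC k) _).trans_eq ?_
        simp_rw [← ENNReal.tsum_mul_left, mul_ite, mul_zero]
    _ = ∑' p : P, (∑' k, if p.1.1 ≤ k then ENNReal.ofReal (ρ k) else 0) * μ (B₂ p) := by
        rw [ENNReal.tsum_comm]
        congr with p
        rw [← ENNReal.tsum_mul_right]
        congr with k
        split_ifs <;> simp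
    _ ≤ ∑' p : P, 2 * ((ENNReal.ofReal A)⁻¹ * σ (ball p.1.2 (ρ p.1.1) ∩ T)) := by
        refine ENNReal.tsum_le_tsum fun p => ?_
        rw [tsum_ite_le_ofReal_div_two_pow, mul_assoc]
        exact mul_le_mul_right (hball p) 2
    _ = 2 * (ENNReal.ofReal A)⁻¹ * σ (⋃ p ∈ P, ball p.2 (ρ p.1) ∩ T) := by
        rw [measure_biUnion hP (hdisj.mono fun _ => inter_subset_left)
          fun _ _ => measurableSet_ball.inter hT, ENNReal.tsum_mul_left, ENNReal.tsum_mul_left,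
          mul_assoc]
    _ ≤ 2 * (ENNReal.ofReal A)⁻¹ * σ (T ∩ ⋃ k, ⋃ y ∈ C k, ball y (ρ k)) := by
        gcongr
        simp only [subset_def, mem_iUnion, mem_inter_iff]
        rintro x ⟨p, hp, hxb, hxT⟩
        exact ⟨hxT, p.1, p.2, hPC p hp, hxb⟩

end Selection

theorem exists_dyadic_annulus {r d : ℝ} (hd : 0 < d) (hdr : d < r) :
    ∃ k : ℕ, r / 2 ^ (k + 1) ≤ d ∧ d < r / 2 ^ k := by
  classical
  have hex : ∃ k : ℕ, r / 2 ^ k ≤ d := by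
    obtain ⟨k, hk⟩ := pow_unbounded_of_one_lt (r / d) one_lt_two
    exact ⟨k, (div_le_iff₀ (by positivity)).2 (mul_comm d _ ▸ ((div_lt_iff₀ hd).1 hk).le)⟩
  obtain ⟨k, hk⟩ : ∃ k, Nat.find hex = k + 1 :=
    Nat.exists_eq_add_one.2 (Nat.pos_of_ne_zero fun h0 => by
      have := Nat.find_spec hex
      rw [h0, pow_zero, div_one] at this
      linarith)
  exact ⟨k, hk ▸ Nat.find_spec hex, not_le.1 (Nat.find_min hex (by omega))⟩

section Kernel

variable {X : Type*} [MetricSpace X] [MeasurableSpace X] [OpensMeasurableSpace X]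
  (ν : Measure X) [NullSingletonClass ν]

theorem setLIntegral_ball_div_dist_pow_le (h : X → ℝ≥0∞) (s : ℕ) {r : ℝ} (hr : 0 < r) (y : X) :
    ∫⁻ x in ball y r, h x / ENNReal.ofReal (dist x y) ^ s ∂ν ≤
      ∑' k : ℕ, (∫⁻ x in ball y (r / 2 ^ k), h x ∂ν) / ENNReal.ofReal (r / 2 ^ (k + 1)) ^ s := by
  let ann (k : ℕ) := ball y (r / 2 ^ k) \ ball y (r / 2 ^ (k + 1))
  -- the centre, where the integrand is `h y / 0`, is a null set
  have hsub : ball y r ⊆ (⋃ k, ann k) ∪ {y} := by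
    intro x hx
    rcases eq_or_ne x y with rfl | hxy
    · exact Or.inr rfl
    obtain ⟨k, hk₁, hk₂⟩ := exists_dyadic_annulus (dist_pos.2 hxy) (mem_ball.1 hx)
    exact Or.inl (mem_iUnion.2 ⟨k, hk₂, not_lt.2 hk₁⟩)
  have hdisj : Pairwise (Function.onFun Disjoint ann) := by
    intro i j hij
    wlog hlt : i < j generalizing i j
    · exact (this hij.symm (by omega)).symm
    exact Set.disjoint_left.2 fun x hi hj =>
      hi.2 (ball_subset_ball (antitone_div_two_pow hr.le hlt) hj.1)
  calc ∫⁻ x in ball y r, h x / ENNReal.ofReal (dist x y) ^ s ∂ν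
      ≤ ∫⁻ x in (⋃ k, ann k) ∪ {y}, h x / ENNReal.ofReal (dist x y) ^ s ∂ν :=
        lintegral_mono_set hsub
    _ ≤ (∫⁻ x in ⋃ k, ann k, h x / ENNReal.ofReal (dist x y) ^ s ∂ν) +
          ∫⁻ x in {y}, h x / ENNReal.ofReal (dist x y) ^ s ∂ν := lintegral_union_le _ _ _
    _ = ∑' k, ∫⁻ x in ann k, h x / ENNReal.ofReal (dist x y) ^ s ∂ν := by
        rw [setLIntegral_measure_zero _ _ (measure_singleton y), add_zero,
          lintegral_iUnion (fun k => measurableSet_ball.diff measurableSet_ball) hdisj]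
    _ ≤ _ := ENNReal.tsum_le_tsum fun k => ?_
  have hρ : ENNReal.ofReal (r / 2 ^ (k + 1)) ^ s ≠ 0 :=
    pow_ne_zero _ (ENNReal.ofReal_pos.2 (by positivity)).ne'
  calc ∫⁻ x in ann k, h x / ENNReal.ofReal (dist x y) ^ s ∂ν
      ≤ ∫⁻ x in ann k, h x / ENNReal.ofReal (r / 2 ^ (k + 1)) ^ s ∂ν :=
        setLIntegral_mono' (measurableSet_ball.diff measurableSet_ball) fun x hx =>
          ENNReal.div_le_div_left (by gcongr; exact not_lt.1 hx.2) _
    _ = (∫⁻ x in ann k, h x ∂ν) / ENNReal.ofReal (r / 2 ^ (k + 1)) ^ s := by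
        simp_rw [div_eq_mul_inv]
        exact lintegral_mul_const' _ _ (ENNReal.inv_ne_top.2 hρ)
    _ ≤ _ := by gcongr; exact sdiff_subset

end Kernel

theorem measurable_setLIntegral_ball {X : Type*} [PseudoMetricSpace X]
    [SecondCountableTopology X] [MeasurableSpace X] [BorelSpace X]
    (ν : Measure X) [SFinite ν] {h : X → ℝ≥0∞} (hh : Measurable h) (s : ℝ) :
    Measurable fun x : X => ∫⁻ y in ball x s, h y ∂ν := by
  have hmeas : Measurable fun p : X × X => (ball p.1 s).indicator h p.2 :=
    (hh.comp measurable_snd).indicator (measurableSet_lt (measurable_snd.dist measurable_fst)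
      measurable_const)
  simpa only [lintegral_indicator measurableSet_ball] using hmeas.lintegral_prod_right'

section Haar

variable {E : Type*} [NormedAddCommGroup E] [NormedSpace ℝ E] [FiniteDimensional ℝ E]
  [MeasurableSpace E] [BorelSpace E] (ν : Measure E) [ν.IsAddHaarMeasure] {h : E → ℝ≥0∞}

theorem measurable_setLAverage_ball (hh : Measurable h) (s : ℝ) :
    Measurable fun x : E => ⨍⁻ y in ball x s, h y ∂ν := by
  simp_rw [setLAverage_eq, Measure.addHaar_ball_center ν _ s]
  exact (measurable_setLIntegral_ball ν hh s).div_const _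

theorem setLAverage_ball_le_of_dist_lt {x z : E} {ρ : ℝ} (hxz : dist x z < ρ) :
    ⨍⁻ y in ball z ρ, h y ∂ν ≤ 2 ^ finrank ℝ E * ⨍⁻ y in ball x (2 * ρ), h y ∂ν := by
  have hvol : ν (ball x (2 * ρ)) = 2 ^ finrank ℝ E * ν (ball z ρ) := by
    rw [Measure.addHaar_ball_mul_of_pos _ _ two_pos, Measure.addHaar_ball_center ν z,
      ENNReal.ofReal_pow zero_le_two, ENNReal.ofReal_ofNat]
  have h2 : (2 : ℝ≥0∞) ^ finrank ℝ E ≠ 0 := pow_ne_zero _ two_ne_zero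
  rw [setLAverage_eq, setLAverage_eq, hvol, ← mul_div_assoc,
    ENNReal.mul_div_mul_left _ _ h2 (pow_ne_top ofNat_ne_top)]
  gcongr
  exact ball_subset_ball' (by rw [dist_comm]; linarith)

theorem setLIntegral_ball_div_ofReal_half_pow [Nontrivial E] (y : E) {ρ : ℝ} (hρ : 0 < ρ) :
    (∫⁻ x in ball y ρ, h x ∂ν) / ENNReal.ofReal (ρ / 2) ^ (finrank ℝ E - 1) =
      2 ^ (finrank ℝ E - 1) * ν (ball 0 1) * (ENNReal.ofReal ρ * ⨍⁻ x in ball y ρ, h x ∂ν) := by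
  have hd : 1 ≤ finrank ℝ E := finrank_pos
  have hsplit : ρ ^ finrank ℝ E = 2 ^ (finrank ℝ E - 1) * ρ * (ρ / 2) ^ (finrank ℝ E - 1) := by
    rw [mul_comm _ ρ, mul_assoc, ← mul_pow, mul_div_cancel₀ _ two_ne_zero, ← pow_succ',
      Nat.sub_add_cancel hd]
  have hX : ENNReal.ofReal (ρ / 2) ^ (finrank ℝ E - 1) ≠ 0 :=
    pow_ne_zero _ (ENNReal.ofReal_pos.2 (by positivity)).ne'
  rw [← measure_mul_setLAverage _ measure_ball_lt_top.ne, Measure.addHaar_ball_of_pos ν y hρ,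
    hsplit, ENNReal.ofReal_mul (by positivity), ENNReal.ofReal_mul (by positivity),
    ENNReal.ofReal_pow (by positivity), ENNReal.ofReal_pow (by positivity), ENNReal.ofReal_ofNat,
    show ∀ a b c d e : ℝ≥0∞, a * b * c * d * e = a * d * (b * e) * c from fun _ _ _ _ _ => by ring,
    ENNReal.mul_div_cancel_right hX (pow_ne_top ofReal_ne_top)]

theorem setLIntegral_ball_div_dist_pow_le_tsum_laverage [Nontrivial E] (h : E → ℝ≥0∞) {r : ℝ}
    (hr : 0 < r) (y : E) :
    ∫⁻ x in ball y r, h x / ENNReal.ofReal (dist x y) ^ (finrank ℝ E - 1) ∂ν ≤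
      2 ^ (finrank ℝ E - 1) * ν (ball 0 1) *
        ∑' k : ℕ, ENNReal.ofReal (r / 2 ^ k) * ⨍⁻ x in ball y (r / 2 ^ k), h x ∂ν := by
  refine (setLIntegral_ball_div_dist_pow_le ν h _ hr y).trans_eq ?_
  rw [← ENNReal.tsum_mul_left]
  congr with k
  rw [pow_succ, ← div_div]
  exact setLIntegral_ball_div_ofReal_half_pow ν y (by positivity)

noncomputable def dyadicMaximalFn (h : E → ℝ≥0∞) (r : ℝ) (x : E) : ℝ≥0∞ :=
  ⨆ k : ℕ, ⨍⁻ y in ball x (r / 2 ^ k), h y ∂ν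

theorem measurable_dyadicMaximalFn (hh : Measurable h) (r : ℝ) :
    Measurable (dyadicMaximalFn ν h r) :=
  Measurable.iSup fun _ => measurable_setLAverage_ball ν hh _

theorem setLAverage_ball_le_dyadicMaximalFn {x z : E} {r : ℝ} {k : ℕ} (hxz : dist x z < r / 2 ^ k) :
    ⨍⁻ y in ball z (r / 2 ^ k), h y ∂ν ≤ 2 ^ finrank ℝ E * dyadicMaximalFn ν h (2 * r) x := by
  refine (setLAverage_ball_le_of_dist_lt ν hxz).trans (mul_le_mul_right ?_ _)
  rw [← mul_div_assoc]
  exact le_iSup (fun j => ⨍⁻ y in ball x (2 * r / 2 ^ j), h y ∂ν) k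

variable (μ σ : Measure E) {K T : Set E} {r A : ℝ}

theorem tsum_ofReal_mul_measure_superlevel_le (hT : MeasurableSet T) (hr : 0 < r) (hA : 0 < A)
    (hyp : ∀ y ∈ K, ∀ k : ℕ, ENNReal.ofReal (A * (r / 2 ^ k)) * μ (ball y (2 * (r / 2 ^ k))) ≤
      σ (ball y (r / 2 ^ k) ∩ T))
    (hK : μ Kᶜ = 0) (t : ℝ≥0∞) :
    ∑' k : ℕ, ENNReal.ofReal (r / 2 ^ k) * μ {y | t ≤ ⨍⁻ x in ball y (r / 2 ^ k), h x ∂ν} ≤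
      2 * (ENNReal.ofReal A)⁻¹ *
        σ (T ∩ {x | t ≤ 2 ^ finrank ℝ E * dyadicMaximalFn ν h (2 * r) x}) := by
  refine (tsum_congr fun k => congrArg (_ * ·) (measure_inter_conull hK).symm).trans_le
    ((tsum_ofReal_div_two_pow_mul_measure_le μ σ _ hT hr hA fun k y hy => hyp y hy.2 k).trans ?_)
  gcongr
  intro x hx
  simp only [mem_iUnion, exists_prop] at hx
  obtain ⟨k, y, ⟨hty, -⟩, hxy⟩ := hx
  exact hty.trans (setLAverage_ball_le_dyadicMaximalFn ν (mem_ball.1 hxy))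

theorem lintegral_tsum_ofReal_mul_setLAverage_le (hT : MeasurableSet T) (hr : 0 < r) (hA : 0 < A)
    (hyp : ∀ y ∈ K, ∀ k : ℕ, ENNReal.ofReal (A * (r / 2 ^ k)) * μ (ball y (2 * (r / 2 ^ k))) ≤
      σ (ball y (r / 2 ^ k) ∩ T))
    (hK : μ Kᶜ = 0) (hh : Measurable h) :
    ∫⁻ y, ∑' k : ℕ, ENNReal.ofReal (r / 2 ^ k) * ⨍⁻ x in ball y (r / 2 ^ k), h x ∂ν ∂μ ≤
      4 * (ENNReal.ofReal A)⁻¹ * 2 ^ finrank ℝ E * ∫⁻ x in T, dyadicMaximalFn ν h (2 * r) x ∂σ := by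
  have havg k := measurable_setLAverage_ball ν hh (r / 2 ^ k)
  have hM := measurable_dyadicMaximalFn ν hh (2 * r)
  calc ∫⁻ y, ∑' k : ℕ, ENNReal.ofReal (r / 2 ^ k) * ⨍⁻ x in ball y (r / 2 ^ k), h x ∂ν ∂μ
      = ∑' k : ℕ, ENNReal.ofReal (r / 2 ^ k) * ∫⁻ y, ⨍⁻ x in ball y (r / 2 ^ k), h x ∂ν ∂μ := by
        rw [lintegral_tsum fun k => ((havg k).const_mul _).aemeasurable]
        exact tsum_congr fun k => lintegral_const_mul _ (havg k)
    _ ≤ ∑' k : ℕ, ENNReal.ofReal (r / 2 ^ k) *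
          ∑' m : ℤ, 2 ^ m * μ {y | 2 ^ m ≤ ⨍⁻ x in ball y (r / 2 ^ k), h x ∂ν} := by
        gcongr with k
        exact lintegral_le_tsum_two_zpow_mul_measure (havg k)
    _ = ∑' m : ℤ, 2 ^ m *
          ∑' k : ℕ, ENNReal.ofReal (r / 2 ^ k) *
            μ {y | 2 ^ m ≤ ⨍⁻ x in ball y (r / 2 ^ k), h x ∂ν} := by
        simp_rw [← ENNReal.tsum_mul_left]
        rw [ENNReal.tsum_comm]
        exact tsum_congr fun m => tsum_congr fun k => mul_left_comm _ _ _
    _ ≤ ∑' m : ℤ, 2 ^ m * (2 * (ENNReal.ofReal A)⁻¹ *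
          (σ.restrict T) {x | 2 ^ m ≤ 2 ^ finrank ℝ E * dyadicMaximalFn ν h (2 * r) x}) := by
        gcongr with m
        rw [Measure.restrict_apply' hT, inter_comm]
        exact tsum_ofReal_mul_measure_superlevel_le ν μ σ hT hr hA hyp hK _
    _ = 2 * (ENNReal.ofReal A)⁻¹ * ∑' m : ℤ, 2 ^ m *
          (σ.restrict T) {x | 2 ^ m ≤ 2 ^ finrank ℝ E * dyadicMaximalFn ν h (2 * r) x} := by
        rw [← ENNReal.tsum_mul_left]
        exact tsum_congr fun m => mul_left_comm _ _ _
    _ ≤ 2 * (ENNReal.ofReal A)⁻¹ *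
          (2 * ∫⁻ x in T, 2 ^ finrank ℝ E * dyadicMaximalFn ν h (2 * r) x ∂σ) := by
        gcongr
        exact tsum_two_zpow_mul_measure_le_two_mul_lintegral (hM.const_mul _)
    _ = 4 * (ENNReal.ofReal A)⁻¹ * 2 ^ finrank ℝ E *
          ∫⁻ x in T, dyadicMaximalFn ν h (2 * r) x ∂σ := by
        rw [lintegral_const_mul _ hM]
        ring

end Haar

theorem ofReal_mul_measure_ball_le_of_shell {X : Type*} [PseudoMetricSpace X] [MeasurableSpace X]
    (μ σ : Measure X) {K : Set X} {A r t : ℝ} (hr : 0 < r)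
    (hyp : ∀ y ∈ K, ∀ j : ℕ, ENNReal.ofReal (A * (2 : ℝ) ^ (-(j : ℤ)) * r) *
        μ (ball y ((2 : ℝ) ^ (-(j : ℤ) + 1) * r)) ≤
      σ ((ball y ((2 : ℝ) ^ (-(j : ℤ)) * r) \ closedBall y ((2 : ℝ) ^ (-(j : ℤ) - 1) * r)) ∩
        {x | (2 : ℝ) ^ (-(j : ℤ)) * r / t < infDist x K ∧ infDist x K < (2 : ℝ) ^ (-(j : ℤ)) * r}))
    (y : X) (hy : y ∈ K) (k : ℕ) :
    ENNReal.ofReal (A * (r / 2 ^ k)) * μ (ball y (2 * (r / 2 ^ k))) ≤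
      σ (ball y (r / 2 ^ k) ∩ {x | infDist x K < r}) := by
  have hk : (2 : ℝ) ^ (-(k : ℤ)) * r = r / 2 ^ k := by rw [zpow_neg, zpow_natCast, inv_mul_eq_div]
  have hk' : (2 : ℝ) ^ (-(k : ℤ) + 1) * r = 2 * (r / 2 ^ k) := by
    rw [zpow_add₀ two_ne_zero, zpow_one, mul_comm _ (2 : ℝ), mul_assoc, hk]
  rw [← hk', ← hk, ← mul_assoc]
  refine (hyp y hy k).trans (measure_mono fun x ⟨⟨hxy, _⟩, _, hxK⟩ => ⟨hxy, ?_⟩)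
  exact hxK.trans_le (hk ▸ div_le_self hr.le (one_le_pow₀ one_le_two))

theorem measSupport_eq_support {n : ℕ} (μ : Measure (EuclideanSpace ℝ (Fin n))) :
    measSupport μ = μ.support :=
  Set.ext fun _ => nhds_basis_ball.mem_measureSupport.symm

theorem dyadicMaximalFn_le_maximalFn {n : ℕ} (h : EuclideanSpace ℝ (Fin n) → ℝ≥0∞) {r : ℝ}
    (hr : 0 < r) (x : EuclideanSpace ℝ (Fin n)) : dyadicMaximalFn volume h r x ≤ maximalFn h x :=
  iSup_le fun k => by
    rw [setLAverage_eq, div_eq_mul_inv, mul_comm]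
    exact le_iSup₂ (f := fun ρ (_ : 0 < ρ) => (volume (ball x ρ))⁻¹ * ∫⁻ y in ball x ρ, h y)
      (r / 2 ^ k) (by positivity)

/-- Let `μ, σ` be finite Borel measures on `ℝⁿ` (`n ≥ 2`), `K` the support
of `μ`, `r > 0`, `t ≥ 1`, `A > 0`, and for `j ≥ 0` let
`N_j = {x : 2^{-j} r / t < dist(x,K) < 2^{-j} r}`. If
`σ((B(y,2^{-j}r) \ closedB(y,2^{-j-1}r)) ∩ N_j) ≥ A 2^{-j} r μ(B(y,2^{-j+1}r))` for all
`y ∈ K` and `j ≥ 0`, then there is `C = C(n,A)` such that for every Borel `h : ℝⁿ → [0,∞]`,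
`∫ I_r(h) dμ ≤ C ∫_{dist(·,K)<r} Mh dσ`. -/
theorem riesz_potential_maximal_function_estimate
    (n : ℕ) (hn : 2 ≤ n) (A : ℝ) (hA : 0 < A) :
    ∃ C : ℝ, 0 < C ∧
      ∀ (μ σ : Measure (EuclideanSpace ℝ (Fin n))),
        IsFiniteMeasure μ → IsFiniteMeasure σ →
      ∀ (r t : ℝ), 0 < r → 1 ≤ t →
        (∀ y ∈ measSupport μ, ∀ j : ℕ,
          ENNReal.ofReal (A * (2 : ℝ) ^ (-(j : ℤ)) * r) *
              μ (Metric.ball y ((2 : ℝ) ^ (-(j : ℤ) + 1) * r)) ≤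
            σ ((Metric.ball y ((2 : ℝ) ^ (-(j : ℤ)) * r) \
                Metric.closedBall y ((2 : ℝ) ^ (-(j : ℤ) - 1) * r)) ∩
              {x | (2 : ℝ) ^ (-(j : ℤ)) * r / t < Metric.infDist x (measSupport μ) ∧
                   Metric.infDist x (measSupport μ) < (2 : ℝ) ^ (-(j : ℤ)) * r})) →
      ∀ h : EuclideanSpace ℝ (Fin n) → ℝ≥0∞, Measurable h →
        (∫⁻ y, (∫⁻ x in Metric.ball y r, h x / ENNReal.ofReal (dist x y) ^ (n - 1)) ∂μ) ≤
          ENNReal.ofReal C *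
            ∫⁻ x in {x | Metric.infDist x (measSupport μ) < r}, maximalFn h x ∂σ := by
  have : Nonempty (Fin n) := ⟨⟨0, by omega⟩⟩
  set C : ℝ≥0∞ := 2 ^ (n - 1) * volume (ball (0 : EuclideanSpace ℝ (Fin n)) 1) *
    (4 * (ENNReal.ofReal A)⁻¹ * 2 ^ n)
  have hC : C ≠ ∞ := by finiteness
  have hC0 : C ≠ 0 := by
    simp [C, (measure_ball_pos volume (0 : EuclideanSpace ℝ (Fin n)) one_pos).ne']
  refine ⟨C.toReal, ENNReal.toReal_pos hC0 hC, ?_⟩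
  intro μ σ _ _ r t hr _ hyp h hh
  set T := {x | infDist x (measSupport μ) < r}
  have hK : μ (measSupport μ)ᶜ = 0 := measSupport_eq_support μ ▸ Measure.measure_compl_support
  have hT : MeasurableSet T :=
    measurableSet_lt (continuous_infDist_pt _).measurable measurable_const
  calc _ ≤ ∫⁻ y, 2 ^ (n - 1) * volume (ball (0 : EuclideanSpace ℝ (Fin n)) 1) *
          ∑' k : ℕ, ENNReal.ofReal (r / 2 ^ k) * ⨍⁻ x in ball y (r / 2 ^ k), h x ∂volume ∂μ :=
        lintegral_mono fun y => by
          simpa only [finrank_euclideanSpace_fin] using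
            setLIntegral_ball_div_dist_pow_le_tsum_laverage volume h hr y
    _ ≤ C * ∫⁻ x in T, dyadicMaximalFn volume h (2 * r) x ∂σ := by
        rw [lintegral_const_mul' _ _ (by finiteness)]
        simp only [C, mul_assoc]
        gcongr
        simpa only [finrank_euclideanSpace_fin, mul_assoc] using
          lintegral_tsum_ofReal_mul_setLAverage_le volume μ σ hT hr hA
            (ofReal_mul_measure_ball_le_of_shell μ σ hr hyp) hK hh
    _ ≤ ENNReal.ofReal C.toReal * ∫⁻ x in T, maximalFn h x ∂σ := by
        rw [ENNReal.ofReal_toReal hC]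
        gcongr with x
        exact dyadicMaximalFn_le_maximalFn h (by positivity) x
end

section
/- (Fuglede's lemma, measure form.) Let 1 ≤ p < ∞ and let f and f_j (j ∈ ℕ) be Borel functions on ℝⁿ such that ∫ |f_j − f|^p dλⁿ → 0 as j → ∞. Then there exist a subsequence (f_{j_k}) and a Borel function g : ℝⁿ → [0,∞] with ∫ g^p dλⁿ < ∞ such that for every finite Borel measure μ on ℝⁿ with ∫ g dμ < ∞, one has ∫ |f_{j_k} − f| dμ → 0 as k → ∞. -/
open MeasureTheory Filter ENNReal
open scoped Topology

/-!
Along a subsequence with `∫ |f_{j_k} − f|^p ≤ 2^{-k(p+1)}`, the rescaled errors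
`2^k |f_{j_k} − f|` still have summable `p`-th power integrals, so their pointwise `ℓ^p` norm `g`
lies in `L^p` and dominates each of them. Hence `∫ |f_{j_k} − f| dμ ≤ 2^{-k} ∫ g dμ` for every
measure `μ`, which tends to `0` as soon as `∫ g dμ < ∞`.
-/

theorem ENNReal.exists_strictMono_tsum_mul_lt_top {a c : ℕ → ℝ≥0∞}
    (ha : Tendsto a atTop (𝓝 0)) (hc : ∀ k, c k ≠ ∞) :
    ∃ φ : ℕ → ℕ, StrictMono φ ∧ ∑' k, c k * a (φ k) < ∞ := by
  have hsmall : ∀ k, ∀ᶠ j in atTop, c k * a j ≤ 2⁻¹ ^ k := fun k => by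
    have hca : Tendsto (fun j => c k * a j) atTop (𝓝 0) := by
      simpa using ENNReal.Tendsto.const_mul ha (Or.inr (hc k))
    exact (hca.eventually (gt_mem_nhds (ENNReal.pow_pos (by norm_num) k))).mono
      fun _ => le_of_lt
  obtain ⟨φ, hφ, hle⟩ := extraction_forall_of_eventually hsmall
  refine ⟨φ, hφ, (ENNReal.tsum_le_tsum hle).trans_lt ?_⟩
  simp [ENNReal.tsum_geometric, ENNReal.one_sub_inv_two]

section PointwiseLpNorm

variable {α : Type*} {p : ℝ}

noncomputable def pointwiseLpNorm (p : ℝ) (h : ℕ → α → ℝ≥0∞) (x : α) : ℝ≥0∞ :=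
  (∑' k, h k x ^ p) ^ p⁻¹

theorem pointwiseLpNorm_rpow (hp : p ≠ 0) (h : ℕ → α → ℝ≥0∞) (x : α) :
    pointwiseLpNorm p h x ^ p = ∑' k, h k x ^ p :=
  ENNReal.rpow_inv_rpow hp _

theorem le_pointwiseLpNorm (hp : 0 < p) (h : ℕ → α → ℝ≥0∞) (k : ℕ) (x : α) :
    h k x ≤ pointwiseLpNorm p h x :=
  (ENNReal.le_rpow_inv_iff hp).2 (ENNReal.le_tsum k)

variable [MeasurableSpace α]

theorem Measurable.pointwiseLpNorm {h : ℕ → α → ℝ≥0∞} (hh : ∀ k, Measurable (h k)) :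
    Measurable (pointwiseLpNorm p h) :=
  (Measurable.tsum fun k => (hh k).pow_const p).pow_const _

theorem lintegral_pointwiseLpNorm_rpow (hp : p ≠ 0) {ν : Measure α} {h : ℕ → α → ℝ≥0∞}
    (hh : ∀ k, AEMeasurable (h k) ν) :
    ∫⁻ x, pointwiseLpNorm p h x ^ p ∂ν = ∑' k, ∫⁻ x, h k x ^ p ∂ν := by
  simp_rw [pointwiseLpNorm_rpow hp]
  exact lintegral_tsum fun k => (hh k).pow_const p

end PointwiseLpNorm

theorem tendsto_lintegral_zero_of_le_mul {α : Type*} [MeasurableSpace α] {μ : Measure α}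
    {u : ℕ → α → ℝ≥0∞} {r : ℕ → ℝ≥0∞} {g : α → ℝ≥0∞} (hr : Tendsto r atTop (𝓝 0))
    (hg : AEMeasurable g μ) (hgμ : ∫⁻ x, g x ∂μ ≠ ∞) (hle : ∀ k x, u k x ≤ r k * g x) :
    Tendsto (fun k => ∫⁻ x, u k x ∂μ) atTop (𝓝 0) := by
  have hbound : ∀ k, ∫⁻ x, u k x ∂μ ≤ r k * ∫⁻ x, g x ∂μ := fun k =>
    (lintegral_mono (hle k)).trans_eq (lintegral_const_mul'' _ hg)
  have hlim : Tendsto (fun k => r k * ∫⁻ x, g x ∂μ) atTop (𝓝 0) := by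
    simpa using ENNReal.Tendsto.mul_const hr (Or.inr hgμ)
  exact tendsto_of_tendsto_of_tendsto_of_le_of_le tendsto_const_nhds hlim (fun _ => zero_le)
    hbound

/-- **Fuglede's lemma, measure form.** Let `1 ≤ p < ∞` and let `f, f_j` be
Borel functions on `ℝⁿ` with `∫ |f_j − f|^p dλⁿ → 0`. Then there are a subsequence
`(f_{j_k})` and a Borel function `g : ℝⁿ → [0,∞]` with `∫ g^p dλⁿ < ∞` such that for every
finite Borel measure `μ` on `ℝⁿ` with `∫ g dμ < ∞` one has `∫ |f_{j_k} − f| dμ → 0`. -/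
theorem fuglede_lemma
    (n : ℕ) (p : ℝ) (hp : 1 ≤ p)
    (f : EuclideanSpace ℝ (Fin n) → ℝ) (F : ℕ → EuclideanSpace ℝ (Fin n) → ℝ)
    (hf : Measurable f) (hF : ∀ j, Measurable (F j))
    (hconv : Tendsto (fun j => ∫⁻ x, ENNReal.ofReal |F j x - f x| ^ p) atTop (nhds 0)) :
    ∃ φ : ℕ → ℕ, StrictMono φ ∧
      ∃ g : EuclideanSpace ℝ (Fin n) → ℝ≥0∞, Measurable g ∧ (∫⁻ x, g x ^ p) < ∞ ∧
        ∀ μ : Measure (EuclideanSpace ℝ (Fin n)), IsFiniteMeasure μ →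
          (∫⁻ x, g x ∂μ) < ∞ →
          Tendsto (fun k => ∫⁻ x, ENNReal.ofReal |F (φ k) x - f x| ∂μ) atTop (nhds 0) := by
  have hp0 : 0 < p := zero_lt_one.trans_le hp
  set err : ℕ → EuclideanSpace ℝ (Fin n) → ℝ≥0∞ := fun j x => ENNReal.ofReal |F j x - f x|
  have herr : ∀ j, Measurable (err j) := fun j => ((hF j).sub hf).abs.ennreal_ofReal
  obtain ⟨φ, hφ, hsum⟩ := ENNReal.exists_strictMono_tsum_mul_lt_top hconv
    (c := fun k => ((2 : ℝ≥0∞) ^ k) ^ p) fun k => by finiteness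
  set w : ℕ → EuclideanSpace ℝ (Fin n) → ℝ≥0∞ := fun k x => 2 ^ k * err (φ k) x
  have hw : ∀ k, Measurable (w k) := fun k => (herr (φ k)).const_mul _
  refine ⟨φ, hφ, pointwiseLpNorm p w, Measurable.pointwiseLpNorm hw, ?_, fun μ _ hgμ => ?_⟩
  · rw [lintegral_pointwiseLpNorm_rpow hp0.ne' fun k => (hw k).aemeasurable]
    simpa only [w, ENNReal.mul_rpow_of_nonneg _ _ hp0.le,
      lintegral_const_mul _ ((herr _).pow_const p)] using hsum
  · refine tendsto_lintegral_zero_of_le_mul (r := fun k => ((2 : ℝ≥0∞) ^ k)⁻¹) ?_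
      (Measurable.pointwiseLpNorm hw).aemeasurable hgμ.ne fun k x => ?_
    · simpa only [ENNReal.inv_pow] using
        ENNReal.tendsto_pow_atTop_nhds_zero_of_lt_one (by norm_num : (2 : ℝ≥0∞)⁻¹ < 1)
    · calc err (φ k) x = ((2 : ℝ≥0∞) ^ k)⁻¹ * w k x :=
            (ENNReal.inv_mul_cancel_left (by positivity) (by finiteness)).symm
        _ ≤ _ := by gcongr; exact le_pointwiseLpNorm hp0 w k x
end

section
/- Let n ≥ 1, let ν : ℝⁿ → [0,∞] be a Borel function, and let u : ℝⁿ → ℝ satisfy |u(b) − u(a)| ≤ |b − a| ∫_0^1 ν(a + t(b − a)) dt for all a, b ∈ ℝⁿ (i.e. ν is an upper gradient of u along straight line segments). Then there exists a constant C depending only on n such that |u(b) − u(a)| ≤ C |b − a| (Mν(a) + Mν(b)) for all a, b ∈ ℝⁿ. -/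
/-!
Average the segment inequality over the ball `B` of radius `|b - a|/2` centred at the midpoint
of `a` and `b`: for `y ∈ B`, `|u(b) - u(a)| ≤ |u(y) - u(a)| + |u(b) - u(y)|`, and each term is
at most `|b - a|` times the integral of `ν` along a segment issuing from an endpoint. Integrating
`ν(a + t(y - a))` over `y ∈ B` is, after the homothety of ratio `t` centred at `a`, `t^{-n}` times
an integral of `ν` over a ball about `a` of radius `t|b - a|`, hence at most `Mν(a) |B(a, |b - a|)|`
uniformly in `t`. Since `|B(a, |b - a|)| = 2ⁿ |B|`, dividing by `|B|` gives the estimate with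
`C = 2ⁿ`.
-/

open MeasureTheory Metric Set ENNReal

theorem lintegral_ball_le_maximalFn_mul_volume {n : ℕ} (ν : EuclideanSpace ℝ (Fin n) → ℝ≥0∞)
    (a : EuclideanSpace ℝ (Fin n)) {ρ : ℝ} (hρ : 0 < ρ) :
    ∫⁻ y in ball a ρ, ν y ≤ maximalFn ν a * volume (ball a ρ) := by
  have hmean : (volume (ball a ρ))⁻¹ * ∫⁻ y in ball a ρ, ν y ≤ maximalFn ν a :=
    le_iSup₂ (f := fun (ρ : ℝ) (_ : 0 < ρ) => (volume (ball a ρ))⁻¹ * ∫⁻ y in ball a ρ, ν y) ρ hρ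
  rwa [ENNReal.inv_mul_le_iff (measure_ball_pos volume a hρ).ne' measure_ball_lt_top.ne,
    mul_comm] at hmean

namespace SegmentUpperGradient

variable {E : Type*} [NormedAddCommGroup E] [NormedSpace ℝ E] [FiniteDimensional ℝ E]
  [MeasurableSpace E] [BorelSpace E] (μ : Measure E) [μ.IsAddHaarMeasure]

noncomputable def segmentLIntegral (ν : E → ℝ≥0∞) (a b : E) : ℝ≥0∞ :=
  ∫⁻ t in Icc (0 : ℝ) 1, ν (a + t • (b - a))

theorem measurable_uncurry_segment {ν : E → ℝ≥0∞} (hν : Measurable ν) (a : E) :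
    Measurable (Function.uncurry fun (y : E) (t : ℝ) => ν (a + t • (y - a))) :=
  hν.comp (by fun_prop)

theorem measurable_segmentLIntegral {ν : E → ℝ≥0∞} (hν : Measurable ν) (a : E) :
    Measurable (segmentLIntegral ν a) :=
  (measurable_uncurry_segment hν a).lintegral_prod_right

theorem map_homothety_addHaar (a : E) {t : ℝ} (ht : 0 < t) :
    μ.map (fun y => a + t • (y - a)) = (ENNReal.ofReal (t ^ Module.finrank ℝ E))⁻¹ • μ := by
  have hcomp : (fun y => a + t • (y - a)) = (fun z => (a - t • a) + z) ∘ (fun y : E => t • y) := by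
    funext y; simp only [Function.comp_apply, smul_sub]; abel
  rw [hcomp, ← Measure.map_map (measurable_const_add _) (measurable_const_smul t),
    Measure.map_addHaar_smul μ ht.ne', Measure.map_smul, map_add_left_eq_self,
    abs_inv, abs_of_pos (pow_pos ht _), ENNReal.ofReal_inv_of_pos (pow_pos ht _)]

variable {μ}

theorem lintegral_ball_comp_homothety_le {ν : E → ℝ≥0∞} (hν : Measurable ν) {a m : E} {s : ℝ}
    (hs : 0 < s) {K : ℝ≥0∞} (hK : ∀ ρ > 0, ∫⁻ y in ball a ρ, ν y ∂μ ≤ K * μ (ball a ρ))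
    {t : ℝ} (ht : 0 < t) :
    ∫⁻ y in ball m s, ν (a + t • (y - a)) ∂μ ≤ K * μ (ball a (dist a m + s)) := by
  set R := dist a m + s
  have hR : 0 < R := by positivity
  have hT : Measurable fun y : E => a + t • (y - a) := by fun_prop
  have hsub : ball m s ⊆ (fun y => a + t • (y - a)) ⁻¹' ball a (t * R) := by
    intro y hy
    have hya : dist y a < R := by
      linarith [dist_triangle y m a, mem_ball.mp hy, dist_comm a m]
    rw [mem_preimage, mem_ball, dist_eq_norm, add_sub_cancel_left, norm_smul, Real.norm_eq_abs,
      abs_of_pos ht, ← dist_eq_norm]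
    exact mul_lt_mul_of_pos_left hya ht
  have hc : ENNReal.ofReal (t ^ Module.finrank ℝ E) ≠ 0 := by
    simpa using pow_pos ht _
  calc ∫⁻ y in ball m s, ν (a + t • (y - a)) ∂μ
      ≤ ∫⁻ y in (fun y => a + t • (y - a)) ⁻¹' ball a (t * R), ν (a + t • (y - a)) ∂μ :=
        lintegral_mono_set hsub
    _ = (ENNReal.ofReal (t ^ Module.finrank ℝ E))⁻¹ * ∫⁻ z in ball a (t * R), ν z ∂μ := by
        rw [← setLIntegral_map measurableSet_ball hν hT, map_homothety_addHaar μ a ht,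
          Measure.restrict_smul, lintegral_smul_measure, smul_eq_mul]
    _ ≤ (ENNReal.ofReal (t ^ Module.finrank ℝ E))⁻¹ * (K * μ (ball a (t * R))) := by
        gcongr; exact hK _ (by positivity)
    _ = K * μ (ball a R) := by
        rw [Measure.addHaar_ball_mul_of_pos μ a ht, ← Measure.addHaar_ball_center μ a,
          mul_left_comm K, ← mul_assoc, ENNReal.inv_mul_cancel hc ofReal_ne_top, one_mul]

theorem lintegral_ball_segmentLIntegral_le {ν : E → ℝ≥0∞} (hν : Measurable ν) {a m : E}
    {s : ℝ} (hs : 0 < s) {K : ℝ≥0∞}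
    (hK : ∀ ρ > 0, ∫⁻ y in ball a ρ, ν y ∂μ ≤ K * μ (ball a ρ)) :
    ∫⁻ y in ball m s, segmentLIntegral ν a y ∂μ ≤ K * μ (ball a (dist a m + s)) := calc
  ∫⁻ y in ball m s, segmentLIntegral ν a y ∂μ
      = ∫⁻ t in Ioc (0 : ℝ) 1, ∫⁻ y in ball m s, ν (a + t • (y - a)) ∂μ := by
        unfold segmentLIntegral
        rw [lintegral_lintegral_swap
          (measurable_uncurry_segment hν a).aemeasurable, setLIntegral_congr Ioc_ae_eq_Icc]
    _ ≤ ∫⁻ _ in Ioc (0 : ℝ) 1, K * μ (ball a (dist a m + s)) :=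
        setLIntegral_mono measurable_const fun t ht =>
          lintegral_ball_comp_homothety_le hν hs hK ht.1
    _ = K * μ (ball a (dist a m + s)) := by simp

theorem lintegral_ball_dist_mul_segmentLIntegral_le {ν : E → ℝ≥0∞} (hν : Measurable ν)
    {a m : E} {s : ℝ} (hs : 0 < s) {K : ℝ≥0∞}
    (hK : ∀ ρ > 0, ∫⁻ y in ball a ρ, ν y ∂μ ≤ K * μ (ball a ρ)) :
    ∫⁻ y in ball m s, ENNReal.ofReal (dist a y) * segmentLIntegral ν a y ∂μ ≤
      ENNReal.ofReal (dist a m + s) * (K * μ (ball a (dist a m + s))) := calc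
  ∫⁻ y in ball m s, ENNReal.ofReal (dist a y) * segmentLIntegral ν a y ∂μ
      ≤ ∫⁻ y in ball m s, ENNReal.ofReal (dist a m + s) * segmentLIntegral ν a y ∂μ := by
        refine setLIntegral_mono ((measurable_segmentLIntegral hν a).const_mul _) fun y hy => ?_
        gcongr
        linarith [dist_triangle a m y, mem_ball'.mp hy]
    _ ≤ ENNReal.ofReal (dist a m + s) * (K * μ (ball a (dist a m + s))) := by
        rw [lintegral_const_mul _ (measurable_segmentLIntegral hν a)]
        gcongr
        exact lintegral_ball_segmentLIntegral_le hν hs hK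

variable (μ) in
theorem ofReal_abs_sub_le_of_segmentLIntegral {ν : E → ℝ≥0∞} (hν : Measurable ν) {u : E → ℝ}
    (hu : ∀ a b, ENNReal.ofReal |u b - u a| ≤ ENNReal.ofReal (dist a b) * segmentLIntegral ν a b)
    {a b : E} {Ka Kb : ℝ≥0∞}
    (hKa : ∀ ρ > 0, ∫⁻ y in ball a ρ, ν y ∂μ ≤ Ka * μ (ball a ρ))
    (hKb : ∀ ρ > 0, ∫⁻ y in ball b ρ, ν y ∂μ ≤ Kb * μ (ball b ρ)) :
    ENNReal.ofReal |u b - u a| ≤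
      ENNReal.ofReal (2 ^ Module.finrank ℝ E * dist a b) * (Ka + Kb) := by
  rcases eq_or_ne a b with rfl | hab
  · simp
  set r := dist a b
  set m := midpoint ℝ a b
  set s := r / 2
  have hs : 0 < s := half_pos (dist_pos.mpr hab)
  have ham : dist a m + s = r := by
    rw [dist_left_midpoint, Real.norm_two]; ring
  have hbm : dist b m + s = r := by
    rw [dist_right_midpoint, Real.norm_two]; ring
  have hvol : ∀ c, μ (ball c r) = ENNReal.ofReal (2 ^ Module.finrank ℝ E) * μ (ball m s) := by
    intro c
    rw [show r = 2 * s by ring, Measure.addHaar_ball_mul_of_pos μ c two_pos,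
      Measure.addHaar_ball_center μ m]
  set I : E → E → ℝ≥0∞ := fun c y => ENNReal.ofReal (dist c y) * segmentLIntegral ν c y
  have hI : ∀ c, Measurable (I c) := fun c =>
    (continuous_const.dist continuous_id).measurable.ennreal_ofReal.mul
      (measurable_segmentLIntegral hν c)
  have hpt : ∀ y, ENNReal.ofReal |u b - u a| ≤ I a y + I b y := fun y => calc
    ENNReal.ofReal |u b - u a| ≤ ENNReal.ofReal (|u y - u a| + |u b - u y|) :=
        ENNReal.ofReal_le_ofReal ((abs_sub_le _ _ _).trans_eq (add_comm _ _))
    _ = ENNReal.ofReal |u y - u a| + ENNReal.ofReal |u y - u b| := by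
        rw [ENNReal.ofReal_add (abs_nonneg _) (abs_nonneg _), abs_sub_comm (u b)]
    _ ≤ I a y + I b y := add_le_add (hu a y) (hu b y)
  have hmean : ENNReal.ofReal |u b - u a| * μ (ball m s) ≤
      ENNReal.ofReal (2 ^ Module.finrank ℝ E * r) * (Ka + Kb) * μ (ball m s) := calc
    ENNReal.ofReal |u b - u a| * μ (ball m s)
        = ∫⁻ _ in ball m s, ENNReal.ofReal |u b - u a| ∂μ := (setLIntegral_const _ _).symm
    _ ≤ ∫⁻ y in ball m s, (I a y + I b y) ∂μ := setLIntegral_mono ((hI a).add (hI b)) fun y _ => hpt y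
    _ = (∫⁻ y in ball m s, I a y ∂μ) + ∫⁻ y in ball m s, I b y ∂μ := lintegral_add_left (hI a) _
    _ ≤ ENNReal.ofReal r * (Ka * μ (ball a r)) + ENNReal.ofReal r * (Kb * μ (ball b r)) := by
        gcongr
        · simpa only [ham] using lintegral_ball_dist_mul_segmentLIntegral_le hν (m := m) hs hKa
        · simpa only [hbm] using lintegral_ball_dist_mul_segmentLIntegral_le hν (m := m) hs hKb
    _ = ENNReal.ofReal (2 ^ Module.finrank ℝ E * r) * (Ka + Kb) * μ (ball m s) := by
        rw [hvol a, hvol b, ENNReal.ofReal_mul (by positivity)]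
        ring
  exact (ENNReal.mul_le_mul_iff_left (measure_ball_pos μ m hs).ne' measure_ball_lt_top.ne).mp hmean

end SegmentUpperGradient

theorem upper_gradient_maximal_function_estimate_general
    (n : ℕ) :
    ∃ C : ℝ, 0 < C ∧
      ∀ (ν : EuclideanSpace ℝ (Fin n) → ℝ≥0∞), Measurable ν →
      ∀ u : EuclideanSpace ℝ (Fin n) → ℝ,
        (∀ a b : EuclideanSpace ℝ (Fin n),
          ENNReal.ofReal |u b - u a| ≤
            ENNReal.ofReal (dist a b) * ∫⁻ t in Set.Icc (0 : ℝ) 1, ν (a + t • (b - a))) →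
        ∀ a b : EuclideanSpace ℝ (Fin n),
          ENNReal.ofReal |u b - u a| ≤
            ENNReal.ofReal (C * dist a b) * (maximalFn ν a + maximalFn ν b) := by
  refine ⟨2 ^ n, by positivity, fun ν hν u hu a b => ?_⟩
  simpa only [finrank_euclideanSpace_fin] using
    SegmentUpperGradient.ofReal_abs_sub_le_of_segmentLIntegral volume hν hu
      (fun _ => lintegral_ball_le_maximalFn_mul_volume ν a)
      (fun _ => lintegral_ball_le_maximalFn_mul_volume ν b)

/-- Let `n ≥ 1`, let `ν : ℝⁿ → [0,∞]` be Borel and `u : ℝⁿ → ℝ` satisfy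
`|u(b) − u(a)| ≤ |b − a| ∫_0^1 ν(a + t(b − a)) dt` for all `a, b` (upper gradient along
segments). Then there is `C = C(n)` with
`|u(b) − u(a)| ≤ C |b − a| (Mν(a) + Mν(b))` for all `a, b` (trivially true when the
right-hand side is infinite, which is automatic in `[0,∞]`). -/
theorem upper_gradient_maximal_function_estimate
    (n : ℕ) (hn : 1 ≤ n) :
    ∃ C : ℝ, 0 < C ∧
      ∀ (ν : EuclideanSpace ℝ (Fin n) → ℝ≥0∞), Measurable ν →
      ∀ u : EuclideanSpace ℝ (Fin n) → ℝ,
        (∀ a b : EuclideanSpace ℝ (Fin n),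
          ENNReal.ofReal |u b - u a| ≤
            ENNReal.ofReal (dist a b) * ∫⁻ t in Set.Icc (0 : ℝ) 1, ν (a + t • (b - a))) →
        ∀ a b : EuclideanSpace ℝ (Fin n),
          ENNReal.ofReal |u b - u a| ≤
            ENNReal.ofReal (C * dist a b) * (maximalFn ν a + maximalFn ν b) :=
  upper_gradient_maximal_function_estimate_general n
end

section
/- Let n ≥ 1, let ν : ℝⁿ → [0,∞] be a Borel function that is locally integrable with respect to Lebesgue measure, and let u : ℝⁿ → ℝ satisfy |u(b) − u(a)| ≤ |b − a| ∫_0^1 ν(a + t(b − a)) dt for all a, b ∈ ℝⁿ. Then for every k ∈ ℕ the restriction of u to the set {x ∈ ℝⁿ : Mν(x) ≤ k} is Lipschitz (with constant at most 2Ck for a constant C depending only on n), and u is Lebesgue measurable. -/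
/-!
Fix `x ≠ y`, `r = |x - y|`, and average `|u x - u y| ≤ |u z - u x| + |u z - u y|` over
`z ∈ B(x, r)`. By the upper-gradient inequality and Tonelli, each term is controlled by
`R ∫₀¹ ∫_{B(a, R)} ν(a + t(z - a)) dz dt` for `a ∈ {x, y}` and `R ∈ {r, 2r}`; for fixed `t`
the inner integral is a rescaled ball average of `ν` around `a`, hence at most
`Mν(a) λⁿ(B(a, R))`. So `u` is Lipschitz on `{Mν ≤ k}`. These sets are closed since `Mν` is
lower semicontinuous; replacing `ν` by its integrable truncations to large balls, the Lebesgue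
differentiation theorem shows that they cover almost all of `ℝⁿ`, so `u` is a.e. measurable.
-/

open MeasureTheory Metric Set ENNReal

open Filter Module
open scoped NNReal

section Homothety

variable {E : Type*} [NormedAddCommGroup E] [NormedSpace ℝ E] [MeasurableSpace E] [BorelSpace E]
  [FiniteDimensional ℝ E] (μ : Measure E) [μ.IsAddHaarMeasure]

theorem lintegral_comp_homothety (f : E → ℝ≥0∞) (x : E) {t : ℝ} (ht : t ≠ 0) :
    ∫⁻ z, f (AffineMap.homothety x t z) ∂μ =
      ENNReal.ofReal |(t ^ finrank ℝ E)⁻¹| * ∫⁻ z, f z ∂μ := by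
  simp only [AffineMap.homothety_apply, vsub_eq_sub, vadd_eq_add]
  calc ∫⁻ z, f (t • (z - x) + x) ∂μ = ∫⁻ z, f (t • z + x) ∂μ :=
        lintegral_sub_right_eq_self (fun z => f (t • z + x)) x
    _ = ∫⁻ z, f (z + x) ∂(μ.map (t • ·)) :=
        (lintegral_map_equiv (fun z => f (z + x)) (MeasurableEquiv.smul₀ t ht)).symm
    _ = _ := by
        rw [Measure.map_addHaar_smul μ ht, lintegral_smul_measure, lintegral_add_right_eq_self,
          smul_eq_mul]

theorem setLIntegral_ball_comp_homothety (f : E → ℝ≥0∞) (x : E) {t : ℝ} (ht : 0 < t)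
    (r : ℝ) :
    ∫⁻ z in ball x r, f (AffineMap.homothety x t z) ∂μ =
      ENNReal.ofReal (t ^ finrank ℝ E)⁻¹ * ∫⁻ z in ball x (t * r), f z ∂μ := by
  have hpre : AffineMap.homothety x t ⁻¹' ball x (t * r) = ball x r := by
    ext z
    simp [dist_comm z, dist_homothety_center, abs_of_pos ht, ht]
  rw [← hpre, ← lintegral_indicator (measurableSet_ball.preimage
      (AffineMap.homothety_continuous x t).measurable)]
  simp only [← Function.comp_apply (f := f), indicator_comp_right]
  rw [lintegral_comp_homothety μ _ x ht.ne', lintegral_indicator measurableSet_ball,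
    abs_of_pos (by positivity)]

end Homothety

theorem lowerSemicontinuous_setLIntegral_ball {X : Type*} [PseudoMetricSpace X]
    [MeasurableSpace X] [OpensMeasurableSpace X] (μ : Measure X) (f : X → ℝ≥0∞) (ρ : ℝ) :
    LowerSemicontinuous fun x => ∫⁻ y in ball x ρ, f y ∂μ := by
  intro x₀ a (ha : a < ∫⁻ y in ball x₀ ρ, f y ∂μ)
  have hunion : ball x₀ ρ = ⋃ k : ℕ, ball x₀ (ρ - 1 / (k + 1)) := by
    ext y
    simp only [mem_ball, mem_iUnion]
    refine ⟨fun hy => ?_, fun ⟨k, hk⟩ => hk.trans_le (by simp; positivity)⟩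
    obtain ⟨k, hk⟩ := exists_nat_one_div_lt (sub_pos.2 hy)
    exact ⟨k, by linarith⟩
  have hmono : Monotone fun k : ℕ => ball x₀ (ρ - 1 / (k + 1)) := fun i j hij =>
    ball_subset_ball (by gcongr)
  rw [← withDensity_apply _ measurableSet_ball, hunion, hmono.measure_iUnion] at ha
  obtain ⟨k, hk⟩ := lt_iSup_iff.1 ha
  filter_upwards [ball_mem_nhds x₀ (Nat.one_div_pos_of_nat (α := ℝ) (n := k))] with x hx
  calc a < μ.withDensity f (ball x₀ (ρ - 1 / (k + 1))) := hk
    _ ≤ μ.withDensity f (ball x ρ) := measure_mono <| ball_subset_ball' <| by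
        rw [dist_comm]
        linarith [mem_ball.1 hx]
    _ = ∫⁻ y in ball x ρ, f y ∂μ := withDensity_apply _ measurableSet_ball

def IsSegmentUpperGradientOn {E : Type*} [NormedAddCommGroup E] [NormedSpace ℝ E]
    (ν : E → ℝ≥0∞) (u : E → ℝ) (s : Set E) : Prop :=
  ∀ a ∈ s, ∀ b ∈ s, ENNReal.ofReal |u b - u a| ≤
    ENNReal.ofReal (dist a b) * ∫⁻ t in Icc (0 : ℝ) 1, ν (a + t • (b - a))

namespace IsSegmentUpperGradientOn

variable {E : Type*} [NormedAddCommGroup E] [NormedSpace ℝ E] {ν : E → ℝ≥0∞} {u : E → ℝ}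
  {s : Set E}

theorem mono (hu : IsSegmentUpperGradientOn ν u s) {t : Set E} (hts : t ⊆ s) :
    IsSegmentUpperGradientOn ν u t :=
  fun a ha b hb => hu a (hts ha) b (hts hb)

theorem indicator (hu : IsSegmentUpperGradientOn ν u s) (hs : Convex ℝ s) :
    IsSegmentUpperGradientOn (s.indicator ν) u s := by
  intro a ha b hb
  rw [setLIntegral_congr_fun measurableSet_Icc fun t ht =>
    indicator_of_mem (hs.add_smul_sub_mem ha hb ht) ν]
  exact hu a ha b hb

end IsSegmentUpperGradientOn

theorem measurable_setLIntegral_segment {E : Type*} [NormedAddCommGroup E] [NormedSpace ℝ E]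
    [MeasurableSpace E] [BorelSpace E] [SecondCountableTopology E] {ν : E → ℝ≥0∞}
    (hν : Measurable ν) (a : E) :
    Measurable fun b => ∫⁻ t in Icc (0 : ℝ) 1, ν (a + t • (b - a)) :=
  Measurable.lintegral_prod_right' (hν.comp (by fun_prop : Continuous
    fun p : E × ℝ => a + p.2 • (p.1 - a)).measurable)

theorem aemeasurable_of_continuousOn_of_ae_mem_iUnion {α β ι : Type*} [TopologicalSpace α]
    [MeasurableSpace α] [OpensMeasurableSpace α] [TopologicalSpace β] [MeasurableSpace β]
    [BorelSpace β] [Countable ι] {μ : Measure α} {f : α → β} {s : ι → Set α}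
    (hs : ∀ i, MeasurableSet (s i)) (hf : ∀ i, ContinuousOn f (s i))
    (hcover : ∀ᵐ x ∂μ, x ∈ ⋃ i, s i) : AEMeasurable f μ := by
  rw [← Measure.restrict_eq_self_of_ae_mem hcover]
  exact aemeasurable_iUnion_iff.2 fun i => (hf i).aemeasurable (hs i)

section Euclidean

variable {n : ℕ}

local notation "ℝⁿ" => EuclideanSpace ℝ (Fin n)

theorem maximalFn_le_iff {f : ℝⁿ → ℝ≥0∞} {x : ℝⁿ} {c : ℝ≥0∞} :
    maximalFn f x ≤ c ↔ ∀ ρ > 0, ∫⁻ y in ball x ρ, f y ≤ c * volume (ball x ρ) := by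
  refine iSup₂_le_iff.trans (forall₂_congr fun ρ hρ => ?_)
  rw [ENNReal.inv_mul_le_iff (measure_ball_pos volume x hρ).ne' measure_ball_lt_top.ne,
    mul_comm]

theorem setLIntegral_ball_le_maximalFn_mul (f : ℝⁿ → ℝ≥0∞) (x : ℝⁿ) {ρ : ℝ} (hρ : 0 < ρ) :
    ∫⁻ y in ball x ρ, f y ≤ maximalFn f x * volume (ball x ρ) :=
  maximalFn_le_iff.1 le_rfl ρ hρ

theorem lowerSemicontinuous_maximalFn (f : ℝⁿ → ℝ≥0∞) : LowerSemicontinuous (maximalFn f) :=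
  lowerSemicontinuous_iSup fun ρ => lowerSemicontinuous_iSup fun hρ => by
    simp only [Measure.addHaar_ball_center volume _ ρ]
    have hV : (volume (ball (0 : ℝⁿ) ρ))⁻¹ ≠ ∞ := inv_ne_top.2 (measure_ball_pos volume 0 hρ).ne'
    exact (ENNReal.continuous_const_mul hV).comp_lowerSemicontinuous
      (lowerSemicontinuous_setLIntegral_ball volume f ρ) fun _ _ h => mul_le_mul_right h _

theorem isClosed_setOf_maximalFn_le (f : ℝⁿ → ℝ≥0∞) (c : ℝ≥0∞) :
    IsClosed {x | maximalFn f x ≤ c} :=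
  (lowerSemicontinuous_maximalFn f).isClosed_preimage c

theorem maximalFn_le_max {f : ℝⁿ → ℝ≥0∞} {x : ℝⁿ} {ε : ℝ} {C : ℝ≥0∞}
    (hsmall : ∀ ρ ∈ Ioo 0 ε, ∫⁻ y in ball x ρ, f y ≤ C * volume (ball x ρ)) :
    maximalFn f x ≤ max C ((volume (ball x ε))⁻¹ * ∫⁻ y, f y) := by
  refine iSup₂_le fun ρ hρ => ?_
  rcases lt_or_ge ρ ε with hρε | hερ
  · refine le_max_of_le_left ((ENNReal.inv_mul_le_iff (measure_ball_pos volume x hρ).ne'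
      measure_ball_lt_top.ne).2 ?_)
    rw [mul_comm]
    exact hsmall ρ ⟨hρ, hρε⟩
  · exact le_max_of_le_right (mul_le_mul' (ENNReal.inv_le_inv.2 (measure_mono
      (ball_subset_ball hερ))) (setLIntegral_le_lintegral _ _))

theorem ae_maximalFn_lt_top [NeZero n] {f : ℝⁿ → ℝ≥0∞} (hf : ∫⁻ y, f y ≠ ∞) :
    ∀ᵐ x, maximalFn f x < ∞ := by
  have := isFiniteMeasure_withDensity (μ := volume) hf
  filter_upwards [Besicovitch.ae_tendsto_rnDeriv (volume.withDensity f) volume,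
    Measure.rnDeriv_lt_top (volume.withDensity f) volume] with x hx hd
  obtain ⟨ε, hε, hsub⟩ := mem_nhdsGT_iff_exists_Ioo_subset.1
    (hx.eventually_lt_const (ENNReal.lt_add_right hd.ne one_ne_zero))
  refine (maximalFn_le_max fun ρ hρ => ?_).trans_lt (max_lt (add_lt_top.2 ⟨hd, one_lt_top⟩)
    (mul_lt_top (inv_lt_top.2 (measure_ball_pos volume x hε)) hf.lt_top))
  have hρ0 : volume (closedBall x ρ) ≠ 0 := ((measure_ball_pos volume x hρ.1).trans_le
    (measure_mono ball_subset_closedBall)).ne'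
  calc ∫⁻ y in ball x ρ, f y = volume.withDensity f (ball x ρ) :=
        (withDensity_apply _ measurableSet_ball).symm
    _ ≤ volume.withDensity f (closedBall x ρ) := measure_mono ball_subset_closedBall
    _ ≤ _ * volume (closedBall x ρ) :=
        (ENNReal.div_le_iff hρ0 measure_closedBall_lt_top.ne).1 (hsub hρ).le
    _ = _ := by rw [Measure.addHaar_closedBall_eq_addHaar_ball]

variable {ν : EuclideanSpace ℝ (Fin n) → ℝ≥0∞}

theorem setLIntegral_ball_comp_homothety_le_maximalFn (x : ℝⁿ) {t r : ℝ} (ht : 0 < t)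
    (hr : 0 < r) :
    ∫⁻ z in ball x r, ν (AffineMap.homothety x t z) ≤ maximalFn ν x * volume (ball x r) := by
  have hvol : volume (ball x (t * r)) = ENNReal.ofReal (t ^ n) * volume (ball x r) := by
    rw [Measure.addHaar_ball_mul_of_pos volume x ht, finrank_euclideanSpace_fin,
      Measure.addHaar_ball_center volume x r]
  have hcancel : ENNReal.ofReal (t ^ n)⁻¹ * ENNReal.ofReal (t ^ n) = 1 := by
    rw [← ENNReal.ofReal_mul (by positivity), inv_mul_cancel₀ (by positivity), ofReal_one]
  calc ∫⁻ z in ball x r, ν (AffineMap.homothety x t z)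
      = ENNReal.ofReal (t ^ n)⁻¹ * ∫⁻ z in ball x (t * r), ν z := by
        rw [setLIntegral_ball_comp_homothety volume ν x ht r, finrank_euclideanSpace_fin]
    _ ≤ ENNReal.ofReal (t ^ n)⁻¹ * (maximalFn ν x * volume (ball x (t * r))) :=
        mul_le_mul_right (setLIntegral_ball_le_maximalFn_mul ν x (by positivity)) _
    _ = maximalFn ν x * volume (ball x r) := by
        rw [hvol, mul_left_comm, ← mul_assoc (ENNReal.ofReal _), hcancel, one_mul]

theorem setLIntegral_ball_dist_mul_segment_le (hν : Measurable ν) (x : ℝⁿ) {r : ℝ} (hr : 0 < r) :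
    ∫⁻ z in ball x r, ENNReal.ofReal (dist x z) * ∫⁻ t in Icc (0 : ℝ) 1, ν (x + t • (z - x)) ≤
      ENNReal.ofReal r * maximalFn ν x * volume (ball x r) := by
  have hmeas : Measurable (Function.uncurry fun (z : ℝⁿ) (t : ℝ) => ν (x + t • (z - x))) :=
    hν.comp (by fun_prop : Continuous fun p : ℝⁿ × ℝ => x + p.2 • (p.1 - x)).measurable
  calc ∫⁻ z in ball x r, ENNReal.ofReal (dist x z) * ∫⁻ t in Icc (0 : ℝ) 1, ν (x + t • (z - x))
      ≤ ∫⁻ z in ball x r, ENNReal.ofReal r * ∫⁻ t in Icc (0 : ℝ) 1, ν (x + t • (z - x)) :=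
        setLIntegral_mono' measurableSet_ball fun z hz =>
          mul_le_mul_left (ofReal_le_ofReal (by rw [dist_comm]; exact (mem_ball.1 hz).le)) _
    _ = ENNReal.ofReal r * ∫⁻ t in Icc (0 : ℝ) 1, ∫⁻ z in ball x r, ν (x + t • (z - x)) := by
        rw [lintegral_const_mul' _ _ ofReal_ne_top, lintegral_lintegral_swap hmeas.aemeasurable]
    _ ≤ ENNReal.ofReal r * ∫⁻ _ in Ioc (0 : ℝ) 1, maximalFn ν x * volume (ball x r) := by
        rw [Measure.restrict_congr_set Ioc_ae_eq_Icc.symm]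
        refine mul_le_mul_right (setLIntegral_mono' measurableSet_Ioc fun t ht => ?_) _
        simpa only [AffineMap.homothety_apply, vsub_eq_sub, vadd_eq_add, add_comm] using
          setLIntegral_ball_comp_homothety_le_maximalFn (ν := ν) x ht.1 hr
    _ = ENNReal.ofReal r * maximalFn ν x * volume (ball x r) := by
        rw [setLIntegral_const, Real.volume_Ioc, sub_zero, ofReal_one, mul_one, mul_assoc]

theorem IsSegmentUpperGradientOn.dist_le_of_maximalFn_le {u : ℝⁿ → ℝ} {s : Set ℝⁿ}
    (hu : IsSegmentUpperGradientOn ν u s) (hν : Measurable ν) {x y : ℝⁿ} (hx : x ∈ s)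
    (hy : y ∈ s) (hxy : ball x (dist x y) ⊆ s) {c : ℝ≥0} (hcx : maximalFn ν x ≤ c)
    (hcy : maximalFn ν y ≤ c) :
    dist (u x) (u y) ≤ (2 ^ (n + 1) + 1) * c * dist x y := by
  rcases eq_or_ne x y with rfl | hne
  · simp
  set r := dist x y
  have hr : 0 < r := dist_pos.2 hne
  set V := volume (ball x r)
  set G : ℝⁿ → ℝⁿ → ℝ≥0∞ := fun a z =>
    ENNReal.ofReal (dist a z) * ∫⁻ t in Icc (0 : ℝ) 1, ν (a + t • (z - a))
  have hG : ∀ a, Measurable (G a) := fun a =>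
    (measurable_const.dist measurable_id).ennreal_ofReal.mul (measurable_setLIntegral_segment hν a)
  have hpoint : ∀ z ∈ ball x r, ENNReal.ofReal |u x - u y| ≤ G x z + G y z := fun z hz =>
    calc ENNReal.ofReal |u x - u y| ≤ ENNReal.ofReal (|u z - u x| + |u z - u y|) :=
          ofReal_le_ofReal (abs_sub_comm (u z) (u x) ▸ abs_sub_le _ _ _)
      _ ≤ ENNReal.ofReal |u z - u x| + ENNReal.ofReal |u z - u y| := ofReal_add_le
      _ ≤ G x z + G y z := add_le_add (hu x hx z (hxy hz)) (hu y hy z (hxy hz))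
  have hGx : ∫⁻ z in ball x r, G x z ≤ ENNReal.ofReal r * c * V :=
    (setLIntegral_ball_dist_mul_segment_le hν x hr).trans (by gcongr)
  have hGy : ∫⁻ z in ball x r, G y z ≤ 2 * ENNReal.ofReal r * c * (2 ^ n * V) :=
    calc ∫⁻ z in ball x r, G y z ≤ ∫⁻ z in ball y (2 * r), G y z :=
          lintegral_mono_set (ball_subset_ball' (two_mul r).ge)
      _ ≤ ENNReal.ofReal (2 * r) * maximalFn ν y * volume (ball y (2 * r)) :=
          setLIntegral_ball_dist_mul_segment_le hν y (by positivity)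
      _ ≤ 2 * ENNReal.ofReal r * c * (2 ^ n * V) := by
          rw [Measure.addHaar_ball_mul_of_pos volume y two_pos, finrank_euclideanSpace_fin,
            ← Measure.addHaar_ball_center volume x r, ofReal_mul zero_le_two,
            ofReal_pow zero_le_two, ofReal_ofNat]
          gcongr
  have hmain : ENNReal.ofReal |u x - u y| * V ≤ (2 ^ (n + 1) + 1) * c * ENNReal.ofReal r * V :=
    calc ENNReal.ofReal |u x - u y| * V = ∫⁻ _ in ball x r, ENNReal.ofReal |u x - u y| :=
          (setLIntegral_const _ _).symm
      _ ≤ ∫⁻ z in ball x r, (G x z + G y z) := setLIntegral_mono ((hG x).add (hG y)) hpoint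
      _ = (∫⁻ z in ball x r, G x z) + ∫⁻ z in ball x r, G y z := lintegral_add_left (hG x) _
      _ ≤ ENNReal.ofReal r * c * V + 2 * ENNReal.ofReal r * c * (2 ^ n * V) :=
          add_le_add hGx hGy
      _ = (2 ^ (n + 1) + 1) * c * ENNReal.ofReal r * V := by ring
  have hconst : ((2 : ℝ≥0∞) ^ (n + 1) + 1) * c * ENNReal.ofReal r =
      ENNReal.ofReal ((2 ^ (n + 1) + 1) * c * r) := by
    rw [ofReal_mul (by positivity), ofReal_mul (by positivity), ofReal_coe_nnreal,
      ofReal_add (by positivity) zero_le_one, ofReal_pow zero_le_two, ofReal_ofNat, ofReal_one]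
  rw [Real.dist_eq, ← ofReal_le_ofReal_iff (by positivity)]
  exact hconst ▸ (ENNReal.mul_le_mul_iff_left (measure_ball_pos volume x hr).ne'
    measure_ball_lt_top.ne).1 hmain

theorem IsSegmentUpperGradientOn.lipschitzOnWith_ball_inter {u : ℝⁿ → ℝ} {z : ℝⁿ} {R : ℝ}
    (hu : IsSegmentUpperGradientOn ν u (ball z (3 * R))) (hν : Measurable ν) (c : ℝ≥0) :
    LipschitzOnWith ((2 ^ (n + 1) + 1) * c) u (ball z R ∩ {x | maximalFn ν x ≤ c}) := by
  refine LipschitzOnWith.of_dist_le_mul fun x hx y hy => ?_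
  have hR : ball z R ⊆ ball z (3 * R) :=
    ball_subset_ball (by linarith [nonempty_ball.1 ⟨x, hx.1⟩])
  have hxy : ball x (dist x y) ⊆ ball z (3 * R) := ball_subset_ball' (by
    linarith [dist_triangle_right x y z, mem_ball.1 hx.1, mem_ball.1 hy.1])
  push_cast
  exact hu.dist_le_of_maximalFn_le hν (hR hx.1) (hR hy.1) hxy hx.2 hy.2

theorem IsSegmentUpperGradientOn.aemeasurable [NeZero n] {u : ℝⁿ → ℝ}
    (hu : IsSegmentUpperGradientOn ν u univ) (hν : Measurable ν)
    (hloc : ∀ K : Set ℝⁿ, IsCompact K → ∫⁻ x in K, ν x < ∞) : AEMeasurable u volume := by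
  set g : ℕ → ℝⁿ → ℝ≥0∞ := fun m => (ball 0 (3 * m)).indicator ν
  have hg : ∀ m, IsSegmentUpperGradientOn (g m) u (ball 0 (3 * m)) := fun m =>
    (hu.mono (subset_univ _)).indicator (convex_ball _ _)
  have hgfin : ∀ m, ∫⁻ y, g m y ≠ ∞ := fun m => by
    rw [lintegral_indicator measurableSet_ball]
    exact ((lintegral_mono_set ball_subset_closedBall).trans_lt
      (hloc _ (isCompact_closedBall _ _))).ne
  refine aemeasurable_of_continuousOn_of_ae_mem_iUnion
    (s := fun p : ℕ × ℕ => ball 0 p.1 ∩ {x | maximalFn (g p.1) x ≤ (p.2 : ℝ≥0)})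
    (fun p => measurableSet_ball.inter (isClosed_setOf_maximalFn_le _ _).measurableSet)
    (fun p => ((hg p.1).lipschitzOnWith_ball_inter (hν.indicator measurableSet_ball)
      p.2).continuousOn) ?_
  filter_upwards [ae_all_iff.2 fun m => ae_maximalFn_lt_top (hgfin m)] with x hx
  obtain ⟨m, hm⟩ := exists_nat_gt ‖x‖
  obtain ⟨k, hk⟩ := ENNReal.exists_nat_gt (hx m).ne
  exact mem_iUnion.2 ⟨(m, k), mem_ball_zero_iff.2 hm, mod_cast hk.le⟩

end Euclidean

/-- Let `n ≥ 1`, let `ν : ℝⁿ → [0,∞]` be Borel and locally integrable,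
and let `u : ℝⁿ → ℝ` satisfy `|u(b) − u(a)| ≤ |b − a| ∫_0^1 ν(a + t(b − a)) dt` for all
`a, b`. Then there is `C = C(n)` such that for every `k ∈ ℕ` the restriction of `u` to
`{Mν ≤ k}` is Lipschitz with constant at most `2Ck`, and `u` is Lebesgue measurable. -/
theorem upper_gradient_implies_measurable
    (n : ℕ) (hn : 1 ≤ n) :
    ∃ C : ℝ, 0 < C ∧
      ∀ (ν : EuclideanSpace ℝ (Fin n) → ℝ≥0∞), Measurable ν →
        (∀ K : Set (EuclideanSpace ℝ (Fin n)), IsCompact K → (∫⁻ x in K, ν x) < ∞) →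
      ∀ u : EuclideanSpace ℝ (Fin n) → ℝ,
        (∀ a b : EuclideanSpace ℝ (Fin n),
          ENNReal.ofReal |u b - u a| ≤
            ENNReal.ofReal (dist a b) * ∫⁻ t in Set.Icc (0 : ℝ) 1, ν (a + t • (b - a))) →
        (∀ k : ℕ, ∀ x ∈ {x | maximalFn ν x ≤ (k : ℝ≥0∞)},
            ∀ y ∈ {x | maximalFn ν x ≤ (k : ℝ≥0∞)},
              dist (u x) (u y) ≤ 2 * C * (k : ℝ) * dist x y) ∧
        AEMeasurable u volume := by
  have : NeZero n := ⟨by omega⟩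
  refine ⟨2 ^ n + 1, by positivity, fun ν hν hloc u hu => ?_⟩
  have hu' : IsSegmentUpperGradientOn ν u univ := fun a _ b _ => hu a b
  refine ⟨fun k x hx y hy => ?_, hu'.aemeasurable hν hloc⟩
  calc dist (u x) (u y) ≤ (2 ^ (n + 1) + 1) * (k : ℝ≥0) * dist x y :=
        hu'.dist_le_of_maximalFn_le hν trivial trivial (subset_univ _) (mod_cast hx)
          (mod_cast hy)
    _ ≤ 2 * (2 ^ n + 1) * k * dist x y := by
        push_cast
        gcongr
        rw [pow_succ]
        linarith
end

section
/- Let 1 ≤ q < ∞, let μ be a nonzero finite Borel measure on ℝⁿ, and let B ⊆ ℝⁿ be a Borel set with 0 < λⁿ(B) < ∞. Then there exists c > 0 such that every Borel function f : ℝⁿ → [0,∞] satisfying ∫_{ℝⁿ} f(x + y) dμ(y) ≥ 1 for every x ∈ B must satisfy ∫_{ℝⁿ} f^q dλⁿ ≥ c. -/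
/-!
By Hölder's inequality on the finite measure `μ`, every `x ∈ B` satisfies
`1 ≤ μ(ℝⁿ)^(q-1) ∫ f(x + y)^q dμ(y)`. Integrating over `B`, exchanging the integrals (Tonelli)
and using translation invariance of `λⁿ` gives `λⁿ(B) ≤ μ(ℝⁿ)^q ∫ f^q dλⁿ`, so
`c = λⁿ(B) / μ(ℝⁿ)^q` works.
-/

open MeasureTheory Set ENNReal

theorem lintegral_rpow_le_measure_univ_rpow_mul {α : Type*} [MeasurableSpace α] (μ : Measure α)
    {q : ℝ} (hq : 1 ≤ q) {f : α → ℝ≥0∞} (hf : AEMeasurable f μ) :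
    (∫⁻ x, f x ∂μ) ^ q ≤ μ univ ^ (q - 1) * ∫⁻ x, f x ^ q ∂μ := by
  have hq0 : 0 < q := one_pos.trans_le hq
  have hL1 := eLpNorm'_le_eLpNorm'_mul_rpow_measure_univ one_pos hq hf.aestronglyMeasurable
  simp only [eLpNorm'_eq_lintegral_enorm, enorm_eq_self, rpow_one, div_one] at hL1
  calc (∫⁻ x, f x ∂μ) ^ q
      ≤ ((∫⁻ x, f x ^ q ∂μ) ^ (1 / q) * μ univ ^ (1 - 1 / q)) ^ q := by gcongr
    _ = μ univ ^ (q - 1) * ∫⁻ x, f x ^ q ∂μ := by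
      rw [mul_rpow_of_nonneg _ _ hq0.le, ← rpow_mul, ← rpow_mul, one_div_mul_cancel hq0.ne',
        rpow_one, sub_mul, one_mul, one_div_mul_cancel hq0.ne', mul_comm]

section Translates

variable {G : Type*} [MeasurableSpace G] [AddGroup G] [MeasurableAdd₂ G]
  (ν μ : Measure G) [SFinite ν] [SFinite μ] [ν.IsAddRightInvariant]

theorem lintegral_lintegral_add_eq_measure_univ_mul {g : G → ℝ≥0∞} (hg : Measurable g) :
    ∫⁻ x, ∫⁻ y, g (x + y) ∂μ ∂ν = μ univ * ∫⁻ x, g x ∂ν := by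
  have hg_add : Measurable (Function.uncurry fun x y => g (x + y)) := hg.comp measurable_add
  rw [lintegral_lintegral_swap hg_add.aemeasurable]
  simp only [lintegral_add_right_eq_self g, lintegral_const, mul_comm]

theorem measure_le_measure_univ_rpow_mul_lintegral_rpow {q : ℝ} (hq : 1 ≤ q)
    {f : G → ℝ≥0∞} (hf : Measurable f) {B : Set G} (hB : ∀ x ∈ B, 1 ≤ ∫⁻ y, f (x + y) ∂μ) :
    ν B ≤ μ univ ^ q * ∫⁻ x, f x ^ q ∂ν := by
  have hfq : Measurable fun z : G × G => f (z.1 + z.2) ^ q := (hf.comp measurable_add).pow_const q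
  calc ν B = ∫⁻ _ in B, 1 ∂ν := by rw [setLIntegral_const, one_mul]
    _ ≤ ∫⁻ x in B, μ univ ^ (q - 1) * ∫⁻ y, f (x + y) ^ q ∂μ ∂ν :=
      setLIntegral_mono (hfq.lintegral_prod_right'.const_mul _) fun x hx =>
        (one_le_rpow (hB x hx) (by linarith)).trans <|
          lintegral_rpow_le_measure_univ_rpow_mul μ hq
            (hf.comp (measurable_const_add x)).aemeasurable
    _ ≤ ∫⁻ x, μ univ ^ (q - 1) * ∫⁻ y, f (x + y) ^ q ∂μ ∂ν := setLIntegral_le_lintegral _ _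
    _ = μ univ ^ (q - 1) * (μ univ * ∫⁻ x, f x ^ q ∂ν) := by
      rw [lintegral_const_mul _ hfq.lintegral_prod_right',
        lintegral_lintegral_add_eq_measure_univ_mul ν μ (hf.pow_const q)]
    _ = μ univ ^ (q - 1 + 1) * ∫⁻ x, f x ^ q ∂ν := by
      rw [rpow_add_of_nonneg _ _ (by linarith) zero_le_one, rpow_one, mul_assoc]
    _ = μ univ ^ q * ∫⁻ x, f x ^ q ∂ν := by rw [sub_add_cancel]

end Translates

theorem translates_positive_modulus_general
    (n : ℕ) (q : ℝ) (hq : 1 ≤ q)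
    (μ : Measure (EuclideanSpace ℝ (Fin n))) [IsFiniteMeasure μ] (hμ : μ ≠ 0)
    (B : Set (EuclideanSpace ℝ (Fin n)))
    (hBpos : 0 < volume B) (hBfin : volume B < ∞) :
    ∃ c : ℝ, 0 < c ∧
      ∀ f : EuclideanSpace ℝ (Fin n) → ℝ≥0∞, Measurable f →
        (∀ x ∈ B, 1 ≤ ∫⁻ y, f (x + y) ∂μ) →
        ENNReal.ofReal c ≤ ∫⁻ x, f x ^ q := by
  have hMq0 : μ univ ^ q ≠ 0 :=
    (rpow_pos (Measure.measure_univ_pos.mpr hμ) (measure_ne_top μ _)).ne'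
  have hMq_top : μ univ ^ q ≠ ∞ := rpow_ne_top_of_nonneg (by linarith) (measure_ne_top μ _)
  have hc_top : volume B / μ univ ^ q ≠ ∞ := div_ne_top hBfin.ne hMq0
  refine ⟨(volume B / μ univ ^ q).toReal,
    toReal_pos (ENNReal.div_pos_iff.mpr ⟨hBpos.ne', hMq_top⟩).ne' hc_top, fun f hf hB => ?_⟩
  rw [ofReal_toReal hc_top]
  exact div_le_of_le_mul' (measure_le_measure_univ_rpow_mul_lintegral_rpow volume μ hq hf hB)

/-- Let `1 ≤ q < ∞`, let `μ` be a nonzero finite Borel measure on `ℝⁿ`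
and let `B ⊆ ℝⁿ` be Borel with `0 < λⁿ(B) < ∞`. Then there is `c > 0` such that every
Borel `f : ℝⁿ → [0,∞]` with `∫ f(x + y) dμ(y) ≥ 1` for every `x ∈ B` satisfies
`∫ f^q dλⁿ ≥ c`. (Translates of a nonzero measure over a set of positive Lebesgue measure
have positive `q`-modulus.) -/
theorem translates_positive_modulus
    (n : ℕ) (q : ℝ) (hq : 1 ≤ q)
    (μ : Measure (EuclideanSpace ℝ (Fin n))) [IsFiniteMeasure μ] (hμ : μ ≠ 0)
    (B : Set (EuclideanSpace ℝ (Fin n))) (hB : MeasurableSet B)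
    (hBpos : 0 < volume B) (hBfin : volume B < ∞) :
    ∃ c : ℝ, 0 < c ∧
      ∀ f : EuclideanSpace ℝ (Fin n) → ℝ≥0∞, Measurable f →
        (∀ x ∈ B, 1 ≤ ∫⁻ y, f (x + y) ∂μ) →
        ENNReal.ofReal c ≤ ∫⁻ x, f x ^ q :=
  translates_positive_modulus_general n q hq μ hμ B hBpos hBfin
end

section
/- Let P ⊆ ℝⁿ be a compact convex set whose affine hull has dimension m ≥ 1. Then there exists D ≥ 1 such that for every y ∈ P and every r > 0, H^m(P ∩ B(y, 2r)) ≤ D · H^m(P ∩ B(y, r)), where H^m denotes m-dimensional Hausdorff measure on ℝⁿ and B(y, r) the open Euclidean ball. -/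
open MeasureTheory Metric Set ENNReal

/-! The homothety of ratio `c ≥ 1` centred at a point `y` of a convex set `s` maps `s ∩ B(y, r)`
onto a set containing `s ∩ B(y, c r)`, because its inverse contracts `s` into itself towards `y`.
Since `H^d` scales by `c^d` under this homothety, `c = 2` gives the doubling constant `2^m`. -/

section

variable {E : Type*} [NormedAddCommGroup E] [NormedSpace ℝ E]

theorem Convex.inter_ball_subset_homothety_image {s : Set E} (hs : Convex ℝ s) {y : E}
    (hy : y ∈ s) {c : ℝ} (hc : 1 ≤ c) (r : ℝ) :
    s ∩ ball y (c * r) ⊆ AffineMap.homothety y c '' (s ∩ ball y r) := by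
  have hc₀ : 0 < c := one_pos.trans_le hc
  rintro x ⟨hxs, hxr⟩
  refine ⟨AffineMap.homothety y c⁻¹ x, ⟨?_, ?_⟩, ?_⟩
  · rw [AffineMap.homothety_eq_lineMap]
    exact hs.lineMap_mem hy hxs ⟨by positivity, inv_le_one_of_one_le₀ hc⟩
  · rw [mem_ball, dist_homothety_center, Real.norm_of_nonneg (by positivity), dist_comm,
      inv_mul_lt_iff₀ hc₀]
    exact hxr
  · rw [← AffineMap.homothety_mul_apply, mul_inv_cancel₀ hc₀.ne', AffineMap.homothety_one,
      AffineMap.id_apply]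

variable [MeasurableSpace E] [BorelSpace E]

theorem Convex.hausdorffMeasure_inter_ball_le {s : Set E} (hs : Convex ℝ s) {y : E}
    (hy : y ∈ s) {d : ℝ} (hd : 0 ≤ d) {c : ℝ} (hc : 1 ≤ c) (r : ℝ) :
    μH[d] (s ∩ ball y (c * r)) ≤ ENNReal.ofReal (c ^ d) * μH[d] (s ∩ ball y r) := by
  have hc₀ : 0 < c := one_pos.trans_le hc
  calc μH[d] (s ∩ ball y (c * r))
      ≤ μH[d] (AffineMap.homothety y c '' (s ∩ ball y r)) :=
        measure_mono (hs.inter_ball_subset_homothety_image hy hc r)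
    _ = ENNReal.ofReal (c ^ d) * μH[d] (s ∩ ball y r) := by
        rw [hausdorffMeasure_homothety_image hd y hc₀.ne', ENNReal.smul_def, smul_eq_mul,
          Real.nnnorm_of_nonneg hc₀.le, ← ENNReal.ofReal_rpow_of_nonneg hc₀.le hd,
          ENNReal.ofReal_eq_coe_nnreal hc₀.le, ENNReal.coe_rpow_of_nonneg _ hd]

end

theorem convex_set_hausdorff_measure_doubling_general
    (n m : ℕ) (P : Set (EuclideanSpace ℝ (Fin n)))
    (hPconv : Convex ℝ P) :
    ∃ D : ℝ, 1 ≤ D ∧ ∀ y ∈ P, ∀ r : ℝ, 0 < r →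
      μH[(m : ℝ)] (P ∩ Metric.ball y (2 * r)) ≤
        ENNReal.ofReal D * μH[(m : ℝ)] (P ∩ Metric.ball y r) := by
  refine ⟨2 ^ m, one_le_pow₀ one_le_two, fun y hy r _ => ?_⟩
  simpa only [Real.rpow_natCast] using
    hPconv.hausdorffMeasure_inter_ball_le hy m.cast_nonneg one_le_two r

/-- Let `P ⊆ ℝⁿ` be a compact convex set whose affine hull has dimension
`m ≥ 1`. Then there is `D ≥ 1` such that for every `y ∈ P` and `r > 0`,
`H^m(P ∩ B(y,2r)) ≤ D · H^m(P ∩ B(y,r))`. -/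
theorem convex_set_hausdorff_measure_doubling
    (n m : ℕ) (hm : 1 ≤ m) (P : Set (EuclideanSpace ℝ (Fin n)))
    (hPc : IsCompact P) (hPconv : Convex ℝ P)
    (hdim : Module.finrank ℝ (affineSpan ℝ P).direction = m) :
    ∃ D : ℝ, 1 ≤ D ∧ ∀ y ∈ P, ∀ r : ℝ, 0 < r →
      μH[(m : ℝ)] (P ∩ Metric.ball y (2 * r)) ≤
        ENNReal.ofReal D * μH[(m : ℝ)] (P ∩ Metric.ball y r) :=
  convex_set_hausdorff_measure_doubling_general n m P hPconv
end
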